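/- arXiv:math/0504096 — 7 statements merged into one kernel-verified Lean document; each statement's English description precedes it below -/
import Mathlib

section
/- Let d_1, …, d_n be positive integers and let m_1 ≥ m_2 ≥ … ≥ m_n be their decreasing rearrangement. There exists a simple graph (no loops or multiple edges) on n vertices whose vertex degrees are exactly d_1, …, d_n if and only if Σ_{i=1}^n d_i is even and for every j with 1 ≤ j ≤ n one has Σ_{i=1}^j m_i ≤ j(j−1) + Σ_{i=j+1}^n min(j, m_i). -/
/-- A finite sequence `d 0, …, d (n-1)` of integers is *graphical* if there exists a simple
graph on `n` vertices whose vertex degrees are exactly `d 0, …, d (n-1)`. -/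
def Graphical (n : ℕ) (d : ℕ → ℕ) : Prop :=
  ∃ G : SimpleGraph (Fin n), ∀ v : Fin n, (G.neighborSet v).ncard = d (v : ℕ)

/-- The Erdős–Gallai condition for the (nonincreasing) sequence `m 0, …, m (n-1)`
(0-indexed version of `m_1 ≥ … ≥ m_n`):
`∑_{i=1}^j m_i ≤ j(j-1) + ∑_{i=j+1}^n min(j, m_i)` for all `1 ≤ j ≤ n`. -/
def ErdosGallaiCond (n : ℕ) (m : ℕ → ℕ) : Prop :=
  ∀ j, 1 ≤ j → j ≤ n →
    ∑ i ∈ Finset.range j, m i ≤ j * (j - 1) + ∑ i ∈ Finset.Ico j n, min j (m i)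

/-!
Necessity: in a graph, the degrees of any `j` vertices add up to twice the edges among them,
at most `j (j - 1)`, plus the edges leaving them, and a vertex outside sends at most
`min j (deg w)` of those.

Sufficiency, by induction on the length of the sorted sequence (Havel–Hakimi): lay off the
largest term `k = d 0`, i.e. lower the `k` next largest terms by one. The residual sequence has
even sum and, by an arithmetic case analysis, again satisfies the Erdős–Gallai inequalities;
joining a new vertex to the lowered vertices of a realisation of it realises `d`.
-/

open Finset

namespace SimpleGraph

section degree

variable {V : Type*} (G : SimpleGraph V) [Fintype V] [DecidableRel G.Adj]

theorem sum_degree_le_card_mul_add_sum_min [DecidableEq V] (s : Finset V) :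
    ∑ v ∈ s, G.degree v ≤ #s * (#s - 1) + ∑ w ∈ sᶜ, min #s (G.degree w) := by
  have degree_eq (v : V) :
      G.degree v = #(s.bipartiteAbove G.Adj v) + #(sᶜ.bipartiteAbove G.Adj v) := by
    rw [← card_neighborFinset_eq_degree, neighborFinset_eq_filter, bipartiteAbove,
      bipartiteAbove, ← card_union_of_disjoint (disjoint_filter_filter disjoint_compl_right),
      ← filter_union, union_compl]
  have inside (v : V) (hv : v ∈ s) : #(s.bipartiteAbove G.Adj v) ≤ #s - 1 := by
    rw [← card_erase_of_mem hv]
    exact card_le_card fun w hw => by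
      obtain ⟨hws, hvw⟩ := mem_filter.1 hw
      exact mem_erase.2 ⟨hvw.ne.symm, hws⟩
  have outside (w : V) : #(s.bipartiteBelow G.Adj w) ≤ min #s (G.degree w) := by
    refine le_min (card_filter_le _ _) ?_
    rw [← card_neighborFinset_eq_degree]
    exact card_le_card fun v hv => by simpa [adj_comm] using (mem_filter.1 hv).2
  calc ∑ v ∈ s, G.degree v
      = ∑ v ∈ s, #(s.bipartiteAbove G.Adj v) + ∑ v ∈ s, #(sᶜ.bipartiteAbove G.Adj v) := by
        rw [← sum_add_distrib]; exact sum_congr rfl fun v _ => degree_eq v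
    _ = ∑ v ∈ s, #(s.bipartiteAbove G.Adj v) + ∑ w ∈ sᶜ, #(s.bipartiteBelow G.Adj w) := by
        rw [sum_card_bipartiteAbove_eq_sum_card_bipartiteBelow (r := G.Adj) (s := s) (t := sᶜ)]
    _ ≤ #s * (#s - 1) + ∑ w ∈ sᶜ, min #s (G.degree w) := by
        gcongr ?_ + ?_
        · simpa using sum_le_sum inside
        · exact sum_le_sum fun w _ => outside w

theorem ncard_neighborSet_eq_degree (v : V) : (G.neighborSet v).ncard = G.degree v := by
  rw [Set.ncard_eq_toFinset_card', ← card_neighborFinset_eq_degree, neighborFinset]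

end degree

section attachVertex

variable {n : ℕ} (G : SimpleGraph (Fin n)) (s : Set (Fin n))

def attachVertex : SimpleGraph (Fin (n + 1)) :=
  G.map (Fin.succEmb n) ⊔ fromRel fun u v => u = 0 ∧ ∃ i ∈ s, v = i.succ

theorem neighborSet_attachVertex_zero : (G.attachVertex s).neighborSet 0 = Fin.succ '' s := by
  ext w
  rw [mem_neighborSet, attachVertex, sup_adj, map_adj, fromRel_adj]
  cases w using Fin.cases <;> simp [eq_comm]

theorem neighborSet_attachVertex_succ (i : Fin n) :
    (G.attachVertex s).neighborSet i.succ =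
      Fin.succ '' G.neighborSet i ∪ {w | w = 0 ∧ i ∈ s} := by
  ext w
  rw [mem_neighborSet, attachVertex, sup_adj, map_adj, fromRel_adj]
  cases w using Fin.cases <;> simp [eq_comm]

end attachVertex

end SimpleGraph

theorem Fin.sum_filter_val_eq_sum_filter_range {M : Type*} [AddCommMonoid M] (n : ℕ)
    (p : ℕ → Prop) [DecidablePred p] (g : ℕ → M) :
    ∑ v ∈ univ.filter (fun v : Fin n => p v), g v = ∑ i ∈ (range n).filter p, g i := by
  rw [sum_filter, Fin.sum_univ_eq_sum_range (fun i => if p i then g i else 0), sum_filter]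

theorem Graphical.exists_degree_eq {n : ℕ} {d : ℕ → ℕ} (h : Graphical n d) :
    ∃ (G : SimpleGraph (Fin n)) (_ : DecidableRel G.Adj), ∀ v, G.degree v = d v := by
  classical
  obtain ⟨G, hG⟩ := h
  exact ⟨G, inferInstance, fun v => by rw [← G.ncard_neighborSet_eq_degree, hG]⟩

theorem Graphical.even_sum {n : ℕ} {d : ℕ → ℕ} (h : Graphical n d) :
    Even (∑ i ∈ range n, d i) := by
  obtain ⟨G, _, hG⟩ := h.exists_degree_eq
  rw [← Fin.sum_univ_eq_sum_range, ← sum_congr rfl fun v _ => hG v,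
    G.sum_degrees_eq_twice_card_edges]
  exact even_two_mul _

theorem Graphical.erdosGallaiCond {n : ℕ} {d : ℕ → ℕ} (h : Graphical n d) :
    ErdosGallaiCond n d := by
  obtain ⟨G, _, hG⟩ := h.exists_degree_eq
  intro j _ hjn
  have hlt : (range n).filter (· < j) = range j := by ext; simp; omega
  have hge : (range n).filter (¬ · < j) = Ico j n := by ext; simp; omega
  let s := univ.filter (fun v : Fin n => v.val < j)
  have hs : #s = j := by
    rw [card_eq_sum_ones, Fin.sum_filter_val_eq_sum_filter_range n (· < j) (fun _ => 1), hlt,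
      sum_const, card_range, smul_eq_mul, mul_one]
  have := G.sum_degree_le_card_mul_add_sum_min s
  simp only [hG] at this
  rwa [compl_filter, hs, Fin.sum_filter_val_eq_sum_filter_range n (· < j) d, hlt,
    Fin.sum_filter_val_eq_sum_filter_range n (¬ · < j) (fun i => min j (d i)), hge] at this

theorem Graphical.of_perm {n : ℕ} {d m : ℕ → ℕ} (h : Graphical n d) (σ : Equiv.Perm (Fin n))
    (hm : ∀ i : Fin n, m i = d (σ i)) : Graphical n m := by
  obtain ⟨G, hG⟩ := h
  refine ⟨G.map σ.symm.toEmbedding, fun v => ?_⟩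
  have := G.neighborSet_map σ.symm.toEmbedding (σ v)
  rw [show σ.symm.toEmbedding (σ v) = v from σ.symm_apply_apply v] at this
  rw [this, Set.ncard_image_of_injective _ σ.symm.toEmbedding.injective, hG, hm]

theorem Graphical.attachVertex {n : ℕ} {f d : ℕ → ℕ} (hf : Graphical n f) (A : Finset ℕ)
    (hA : A ⊆ range n) (h0 : d 0 = #A)
    (hsucc : ∀ i < n, d (i + 1) = f i + if i ∈ A then 1 else 0) : Graphical (n + 1) d := by
  obtain ⟨G, hG⟩ := hf
  refine ⟨G.attachVertex (Fin.val ⁻¹' A), fun v => ?_⟩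
  cases v using Fin.cases with
  | zero =>
    rw [G.neighborSet_attachVertex_zero, Set.ncard_image_of_injective _ (Fin.succ_injective n),
      Set.ncard_preimage_of_injective_subset_range Fin.val_injective, Set.ncard_coe_finset,
      Fin.val_zero, h0]
    · intro i hi
      exact ⟨⟨i, mem_range.1 (hA hi)⟩, rfl⟩
  | succ i =>
    have hdisj : Disjoint (Fin.succ '' G.neighborSet i) {w | w = 0 ∧ i ∈ Fin.val ⁻¹' A} :=
      Set.disjoint_left.2 fun _ ⟨_, _, hw⟩ h => Fin.succ_ne_zero _ (hw.trans h.1)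
    rw [G.neighborSet_attachVertex_succ, Set.ncard_union_eq hdisj,
      Set.ncard_image_of_injective _ (Fin.succ_injective n), hG, Fin.val_succ, hsucc i i.isLt]
    by_cases hi : (i : ℕ) ∈ A <;> simp [hi]

def ErdosGallaiAt (n : ℕ) (f : ℕ → ℕ) (J : ℕ) : Prop :=
  ∑ i ∈ range J, f i ≤ J * (J - 1) + ∑ i ∈ Ico J n, min J (f i)

theorem ErdosGallaiAt.succ_of_le {n J : ℕ} {f : ℕ → ℕ} (h : ErdosGallaiAt n f J) (hJ : J < n)
    (hfJ : f J ≤ J) : ErdosGallaiAt n f (J + 1) := by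
  have hmin : ∑ i ∈ Ico (J + 1) n, min J (f i) ≤ ∑ i ∈ Ico (J + 1) n, min (J + 1) (f i) :=
    sum_le_sum fun i _ => min_le_min_right _ (Nat.le_succ J)
  have hsq : (J + 1) * J = J * (J - 1) + 2 * J := by cases J <;> simp; ring
  unfold ErdosGallaiAt at *
  rw [sum_eq_sum_Ico_succ_bot hJ] at h
  rw [sum_range_succ, Nat.add_sub_cancel, hsq]
  omega

theorem erdosGallaiCond_of_erdosGallaiAt_of_succ_le {n : ℕ} {f : ℕ → ℕ}
    (h : ∀ j < n, j + 1 ≤ f j → ErdosGallaiAt n f (j + 1)) : ErdosGallaiCond n f := by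
  suffices ∀ J ≤ n, ErdosGallaiAt n f J from fun J _ hJ => this J hJ
  intro J hJ
  induction J with
  | zero => simp [ErdosGallaiAt]
  | succ j ih =>
    by_cases hfj : j + 1 ≤ f j
    · exact h j hJ hfj
    · exact (ih (by omega)).succ_of_le hJ (by omega)

theorem erdosGallaiAt_succ_iff {n J : ℕ} {d : ℕ → ℕ} :
    ErdosGallaiAt (n + 1) d (J + 1) ↔
      d 0 + ∑ i ∈ range J, d (i + 1) ≤ (J + 1) * J + ∑ i ∈ Ico J n, min (J + 1) (d (i + 1)) := by
  rw [ErdosGallaiAt, sum_range_succ', Nat.add_sub_cancel,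
    ← sum_Ico_add' (fun i => min (J + 1) (d i)), add_comm (d 0)]

/-- Those of the `k` largest terms that get lowered: among the terms tied with the `k`-th
largest, the last ones are chosen, so that lowering keeps the sequence nonincreasing. -/
def layOffSet (k a B : ℕ) : Finset ℕ := range a ∪ Ico (a + B - k) B

def layOff (e : ℕ → ℕ) (A : Finset ℕ) (i : ℕ) : ℕ := e i - if i ∈ A then 1 else 0

@[simp] theorem mem_layOffSet {k a B i : ℕ} :
    i ∈ layOffSet k a B ↔ i < a ∨ a + B - k ≤ i ∧ i < B := by
  simp [layOffSet]

theorem card_layOffSet {k a B : ℕ} (hak : a ≤ k) (hkB : k ≤ B) : #(layOffSet k a B) = k := by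
  rw [layOffSet, card_union_of_disjoint (disjoint_left.2 fun i hi hi' => by simp at hi hi'; omega)]
  simp only [card_range, Nat.card_Ico]
  omega

theorem sum_range_indicator_layOffSet {k a B : ℕ} (hak : a ≤ k) (hkB : k ≤ B) (J : ℕ) :
    ∑ i ∈ range J, (if i ∈ layOffSet k a B then 1 else 0) =
      min a J + (min B J - min (a + B - k) J) := by
  induction J with
  | zero => simp
  | succ J ih =>
    rw [sum_range_succ, ih]
    split_ifs with h <;> simp only [mem_layOffSet] at h <;> omega

/-- `c = e (k - 1)` is the `k`-th largest term and `[a, B)` the block of its ties. -/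
structure TieBlock (n : ℕ) (e : ℕ → ℕ) (k a B c : ℕ) : Prop where
  lt_k : a < k
  k_le : k ≤ B
  le_n : B ≤ n
  gt_of_lt : ∀ i < a, c < e i
  eq_of_mem : ∀ i, a ≤ i → i < B → e i = c
  lt_of_le : ∀ i, B ≤ i → i < n → e i < c

theorem exists_tieBlock {n k : ℕ} {e : ℕ → ℕ} (he : AntitoneOn e (Set.Iio n)) (hk : 1 ≤ k)
    (hkn : k ≤ n) : ∃ a B, TieBlock n e k a B (e (k - 1)) := by
  have hA : ∃ i, e i ≤ e (k - 1) := ⟨k - 1, le_rfl⟩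
  have hB : ∃ i, k ≤ i ∧ (i = n ∨ e i < e (k - 1)) := ⟨n, hkn, Or.inl rfl⟩
  have ha := Nat.find_min' hA le_rfl
  obtain ⟨hkB, hB'⟩ := Nat.find_spec hB
  have hBn : Nat.find hB ≤ n := Nat.find_min' hB ⟨hkn, Or.inl rfl⟩
  have anti {i j : ℕ} (hij : i ≤ j) (hj : j < n) : e j ≤ e i :=
    he (by simp; omega) (by simpa) hij
  refine ⟨Nat.find hA, Nat.find hB, by omega, hkB, hBn, fun i hi => ?_, fun i hai hiB => ?_,
    fun i hBi hin => ?_⟩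
  · exact not_le.1 (Nat.find_min hA hi)
  · rcases lt_or_ge i k with hik | hki
    · exact le_antisymm ((anti hai (by omega)).trans (Nat.find_spec hA))
        (anti (by omega) (by omega))
    · have h := Nat.find_min hB hiB
      simp only [not_and, not_or, not_lt] at h
      exact le_antisymm (anti (by omega) (by omega)) (h hki).2
  · rcases hB' with h | h
    · omega
    · exact (anti hBi hin).trans_lt h

namespace TieBlock

variable {n k a B c : ℕ} {e : ℕ → ℕ} (hb : TieBlock n e k a B c)
include hb

theorem le_of_lt_B {i : ℕ} (hi : i < B) : c ≤ e i := by
  rcases lt_or_ge i a with hia | hai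
  · exact (hb.gt_of_lt i hia).le
  · exact (hb.eq_of_mem i hai hi).ge

theorem le_of_le_a {i : ℕ} (hai : a ≤ i) (hin : i < n) : e i ≤ c := by
  rcases lt_or_ge i B with hiB | hBi
  · exact (hb.eq_of_mem i hai hiB).le
  · exact (hb.lt_of_le i hBi hin).le

theorem layOffSet_subset : layOffSet k a B ⊆ range n := fun i hi => by
  have := hb.le_n; have := hb.lt_k; have := hb.k_le; simp at hi ⊢; omega

theorem antitoneOn_layOff (he : AntitoneOn e (Set.Iio n)) :
    AntitoneOn (layOff e (layOffSet k a B)) (Set.Iio n) := by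
  intro i hi j hj hij
  simp only [Set.mem_Iio] at hi hj
  have hej : e j ≤ e i := he hi hj hij
  have := hb.lt_k; have := hb.k_le
  simp only [layOff, mem_layOffSet]
  split_ifs with hjA hiA hiA
  · omega
  · omega
  · have : e j < e i := by
      rcases hiA with hia | hiB
      · exact (hb.le_of_le_a (by omega) hj).trans_lt (hb.gt_of_lt i hia)
      · rw [hb.eq_of_mem i (by omega) hiB.2]
        exact hb.lt_of_le j (by omega) hj
    omega
  · exact hej

theorem layOff_add_indicator (hc : 1 ≤ c) (i : ℕ) :
    layOff e (layOffSet k a B) i + (if i ∈ layOffSet k a B then 1 else 0) = e i := by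
  unfold layOff
  split_ifs with hiA
  · have := hb.le_of_lt_B (i := i) (by simp at hiA; have := hb.lt_k; have := hb.k_le; omega)
    omega
  · rfl

theorem sum_layOff_add (hc : 1 ≤ c) (s : Finset ℕ) :
    ∑ i ∈ s, layOff e (layOffSet k a B) i + ∑ i ∈ s, (if i ∈ layOffSet k a B then 1 else 0) =
      ∑ i ∈ s, e i := by
  rw [← sum_add_distrib]
  exact sum_congr rfl fun i _ => hb.layOff_add_indicator hc i

theorem sum_range_indicator_layOffSet_eq :
    ∑ i ∈ range n, (if i ∈ layOffSet k a B then 1 else 0) = k := by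
  have := hb.lt_k; have := hb.k_le; have := hb.le_n
  rw [sum_range_indicator_layOffSet hb.lt_k.le hb.k_le]
  omega

theorem even_sum_layOff (hc : 1 ≤ c) (heven : Even (k + ∑ i ∈ range n, e i)) :
    Even (∑ i ∈ range n, layOff e (layOffSet k a B) i) := by
  rw [← hb.sum_layOff_add hc, hb.sum_range_indicator_layOffSet_eq] at heven
  obtain ⟨r, hr⟩ := heven
  exact ⟨r - k, by omega⟩

theorem erdosGallaiAt_layOff_of_add_two_le (hc : 1 ≤ c) (hek : ∀ i < n, e i ≤ k) {j : ℕ}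
    (hjk : j < k) (hcj : j + 2 ≤ c) : ErdosGallaiAt n (layOff e (layOffSet k a B)) (j + 1) := by
  have := hb.lt_k; have := hb.le_n
  have hjB : j + 1 ≤ B := by have := hb.k_le; omega
  have hS := hb.sum_layOff_add hc (range (j + 1))
  rw [sum_range_indicator_layOffSet hb.lt_k.le hb.k_le] at hS
  have hSe : ∑ i ∈ range (j + 1), e i ≤ (j + 1) * k := by
    simpa using sum_le_card_nsmul (range (j + 1)) e k fun i hi => hek i (by simp at hi; omega)
  have hblock : ∀ i ∈ Ico (j + 1) B, min (j + 1) (layOff e (layOffSet k a B) i) = j + 1 := by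
    intro i hi
    have hfe := hb.layOff_add_indicator hc i
    have hce := hb.le_of_lt_B (mem_Ico.1 hi).2
    split_ifs at hfe <;> omega
  have hT : (B - (j + 1)) * (j + 1) ≤
      ∑ i ∈ Ico (j + 1) n, min (j + 1) (layOff e (layOffSet k a B) i) := by
    rw [← Nat.card_Ico, ← smul_eq_mul, ← sum_const, ← sum_congr rfl hblock]
    exact sum_le_sum_of_subset (Ico_subset_Ico_right hb.le_n)
  have hprod :
      (B - (j + 1)) * (j + 1) + (j + 1) * j + (j + 1) = (j + 1) * k + (B - k) * (j + 1) := by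
    zify [hb.k_le, hjB]
    ring
  have hBk : B - k ≤ (B - k) * (j + 1) := Nat.le_mul_of_pos_right _ (Nat.succ_pos j)
  rw [ErdosGallaiAt, Nat.add_sub_cancel]
  omega

theorem erdosGallaiAt_layOff_of_lt_a (hc : 1 ≤ c) {j : ℕ} (hja : j < a) (hcj : c ≤ j + 1)
    (hEG : k + ∑ i ∈ range (j + 1), e i ≤
      (j + 2) * (j + 1) + ∑ i ∈ Ico (j + 1) n, min (j + 2) (e i)) :
    ErdosGallaiAt n (layOff e (layOffSet k a B)) (j + 1) := by
  have := hb.lt_k; have := hb.k_le; have := hb.le_n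
  have hS := hb.sum_layOff_add hc (range (j + 1))
  rw [sum_range_indicator_layOffSet hb.lt_k.le hb.k_le] at hS
  have hind := sum_range_add_sum_Ico (fun i => if i ∈ layOffSet k a B then 1 else 0)
    (show j + 1 ≤ n by omega)
  rw [hb.sum_range_indicator_layOffSet_eq, sum_range_indicator_layOffSet hb.lt_k.le hb.k_le]
    at hind
  have hpt : ∀ i ∈ Ico (j + 1) n, min (j + 2) (e i) ≤
      min (j + 1) (layOff e (layOffSet k a B) i) + if i ∈ layOffSet k a B then 1 else 0 := by
    intro i hi
    have hfe := hb.layOff_add_indicator hc i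
    split_ifs at hfe ⊢ with hiA
    · omega
    · have : a ≤ i := by by_contra; exact hiA (mem_layOffSet.2 (Or.inl (by omega)))
      have := hb.le_of_le_a this (mem_Ico.1 hi).2
      omega
  have hT := (sum_le_sum hpt).trans_eq sum_add_distrib
  have hprod : (j + 2) * (j + 1) = (j + 1) * j + 2 * (j + 1) := by ring
  rw [ErdosGallaiAt, Nat.add_sub_cancel]
  omega

theorem erdosGallaiAt_layOff_of_a_lt (hek : ∀ i < n, e i ≤ k) (hac : a < c) (hck : c ≤ k)
    (hc : 2 ≤ c) : ErdosGallaiAt n (layOff e (layOffSet k a B)) c := by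
  have := hb.lt_k; have := hb.k_le; have := hb.le_n
  have hS := hb.sum_layOff_add (by omega) (range c)
  rw [sum_range_indicator_layOffSet hb.lt_k.le hb.k_le] at hS
  have hind := sum_range_add_sum_Ico (fun i => if i ∈ layOffSet k a B then 1 else 0)
    (show c ≤ n by omega)
  rw [hb.sum_range_indicator_layOffSet_eq, sum_range_indicator_layOffSet hb.lt_k.le hb.k_le]
    at hind
  have hT := hb.sum_layOff_add (by omega) (Ico c n)
  have hTmin : ∑ i ∈ Ico c n, min c (layOff e (layOffSet k a B) i) =
      ∑ i ∈ Ico c n, layOff e (layOffSet k a B) i := by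
    refine sum_congr rfl fun i hi => min_eq_right ?_
    exact (Nat.sub_le _ _).trans (hb.le_of_le_a (by simp at hi; omega) (mem_Ico.1 hi).2)
  have hSe : ∑ i ∈ range c, e i = ∑ i ∈ range a, e i + (c - a) * c := by
    rw [← sum_range_add_sum_Ico e hac.le, sum_congr rfl fun i hi => hb.eq_of_mem i
      (mem_Ico.1 hi).1 (by simp at hi; omega), sum_const, Nat.card_Ico, smul_eq_mul]
  have hSa : ∑ i ∈ range a, e i ≤ a * k := by
    simpa using sum_le_card_nsmul (range a) e k fun i hi => hek i (by simp at hi; omega)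
  have hTe : (B - c) * c ≤ ∑ i ∈ Ico c n, e i := by
    rw [← sum_Ico_consecutive e (hck.trans hb.k_le) hb.le_n, sum_congr rfl fun i hi =>
      hb.eq_of_mem i (by simp at hi; omega) (mem_Ico.1 hi).2, sum_const, Nat.card_Ico,
      smul_eq_mul]
    exact Nat.le_add_right _ _
  have key : a * k + (c - a) * c + k ≤
      c * (c - 1) + (B - c) * c + 2 * (a + (c - min (a + B - k) c)) := by
    rcases le_total (a + B - k) c with hβ | hβ
    · rw [min_eq_left hβ]
      zify [hac.le, hck.trans hb.k_le, hβ, show 1 ≤ c by omega, show k ≤ a + B by omega]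
      nlinarith [mul_nonneg (show (0 : ℤ) ≤ k - c by omega) (show (0 : ℤ) ≤ c - a - 1 by omega),
        mul_nonneg (show (0 : ℤ) ≤ c - 2 by omega) (show (0 : ℤ) ≤ B - k by omega)]
    · rw [min_eq_right hβ, Nat.sub_self, add_zero]
      zify [hac.le, hck.trans hb.k_le, show 1 ≤ c by omega]
      nlinarith [mul_nonneg (show (0 : ℤ) ≤ k - c by omega) (show (0 : ℤ) ≤ c - a - 1 by omega),
        mul_nonneg (show (0 : ℤ) ≤ c - 2 by omega) (show (0 : ℤ) ≤ c - a by omega),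
        mul_nonneg (show (0 : ℤ) ≤ c by omega) (show (0 : ℤ) ≤ a + B - k - c by omega)]
  rw [ErdosGallaiAt, hTmin]
  omega

theorem erdosGallaiAt_one_layOff (ha : a = 0) (hc : c = 1)
    (heven : Even (k + ∑ i ∈ range n, e i)) (hf0 : 1 ≤ layOff e (layOffSet k a B) 0) :
    ErdosGallaiAt n (layOff e (layOffSet k a B)) 1 := by
  subst ha hc
  have := hb.lt_k; have := hb.k_le; have := hb.le_n
  have hsum : ∑ i ∈ range n, e i = B := by
    rw [← sum_range_add_sum_Ico e hb.le_n,
      sum_congr rfl fun i hi => hb.eq_of_mem i (Nat.zero_le i) (mem_range.1 hi),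
      sum_congr rfl fun i hi =>
        Nat.lt_one_iff.1 (hb.lt_of_le i (mem_Ico.1 hi).1 (mem_Ico.1 hi).2)]
    simp
  have h0 := hb.layOff_add_indicator le_rfl 0
  have he0 := hb.eq_of_mem 0 le_rfl (by omega)
  have hBk : 1 ≤ B - k := by
    split_ifs at h0 with h0A
    · omega
    · simp only [mem_layOffSet] at h0A; omega
  -- `k + B` is even, so the untouched run of leading `1`s has length at least two
  have hBk2 : 2 ≤ B - k := by
    obtain ⟨r, hr⟩ := heven
    omega
  have h1 := hb.layOff_add_indicator le_rfl 1
  have he1 := hb.eq_of_mem 1 (Nat.zero_le 1) (by omega)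
  rw [if_neg (by simp only [mem_layOffSet]; omega)] at h1
  rw [ErdosGallaiAt]
  calc ∑ i ∈ range 1, layOff e (layOffSet k 0 B) i
      ≤ min 1 (layOff e (layOffSet k 0 B) 1) := by
        simp only [sum_range_one]; omega
    _ ≤ ∑ i ∈ Ico 1 n, min 1 (layOff e (layOffSet k 0 B) i) :=
        single_le_sum (f := fun i => min 1 (layOff e (layOffSet k 0 B) i))
          (fun _ _ => Nat.zero_le _) (mem_Ico.2 ⟨le_rfl, by omega⟩)
    _ = 1 * (1 - 1) + ∑ i ∈ Ico 1 n, min 1 (layOff e (layOffSet k 0 B) i) := by simp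

theorem erdosGallaiCond_layOff (hc : 1 ≤ c) (hek : ∀ i < n, e i ≤ k)
    (hEG : ∀ J ≤ n, k + ∑ i ∈ range J, e i ≤ (J + 1) * J + ∑ i ∈ Ico J n, min (J + 1) (e i))
    (heven : Even (k + ∑ i ∈ range n, e i)) : ErdosGallaiCond n (layOff e (layOffSet k a B)) := by
  have := hb.lt_k; have := hb.k_le; have := hb.le_n
  refine erdosGallaiCond_of_erdosGallaiAt_of_succ_le fun j hj hfj => ?_
  have hej : j + 1 ≤ e j := hfj.trans (Nat.sub_le _ _)
  have hjk : j < k := by have := hek j hj; omega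
  rcases le_or_gt (j + 2) c with hcj | hcj
  · exact hb.erdosGallaiAt_layOff_of_add_two_le hc hek hjk hcj
  rcases lt_or_ge j a with hja | haj
  · exact hb.erdosGallaiAt_layOff_of_lt_a hc hja (by omega) (hEG (j + 1) (by omega))
  have hcj' : c = j + 1 := by have := hb.le_of_le_a haj hj; omega
  rcases Nat.lt_or_ge 1 c with hc2 | hc1
  · rw [← hcj']
    exact hb.erdosGallaiAt_layOff_of_a_lt hek (by omega) (by omega) hc2
  · obtain rfl : j = 0 := by omega
    exact hb.erdosGallaiAt_one_layOff (by omega) (by omega) heven hfj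

end TieBlock

theorem AntitoneOn.le_and_one_le_of_le_sum_min_one {n k : ℕ} {e : ℕ → ℕ}
    (he : AntitoneOn e (Set.Iio n)) (hk : 1 ≤ k) (h : k ≤ ∑ i ∈ range n, min 1 (e i)) :
    k ≤ n ∧ 1 ≤ e (k - 1) := by
  have hn : ∑ i ∈ range n, min 1 (e i) ≤ n := by
    simpa using sum_le_card_nsmul (range n) _ 1 fun i _ => min_le_left 1 (e i)
  refine ⟨by omega, Nat.one_le_iff_ne_zero.2 fun h0 => ?_⟩
  have htail : ∑ i ∈ Ico (k - 1) n, min 1 (e i) = 0 := sum_eq_zero fun i hi => by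
    have := he (by simp; omega) (by simpa using (mem_Ico.1 hi).2) (mem_Ico.1 hi).1
    omega
  have hhead : ∑ i ∈ range (k - 1), min 1 (e i) ≤ k - 1 := by
    simpa using sum_le_card_nsmul (range (k - 1)) _ 1 fun i _ => min_le_left 1 (e i)
  rw [← sum_range_add_sum_Ico _ (show k - 1 ≤ n by omega), htail] at h
  omega

theorem ErdosGallaiCond.graphical {n : ℕ} {d : ℕ → ℕ} (hEG : ErdosGallaiCond n d)
    (hanti : AntitoneOn d (Set.Iio n)) (heven : Even (∑ i ∈ range n, d i)) : Graphical n d := by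
  induction n generalizing d with
  | zero => exact ⟨⊥, fun v => v.elim0⟩
  | succ n ih =>
    have he : AntitoneOn (fun i => d (i + 1)) (Set.Iio n) := fun i hi j hj hij =>
      hanti (by simp at hi ⊢; omega) (by simp at hj ⊢; omega) (by omega)
    have hek : ∀ i < n, d (i + 1) ≤ d 0 := fun i hi =>
      hanti (by simp) (by simp; omega) (Nat.zero_le _)
    have hEG' (J : ℕ) (hJ : J ≤ n) : d 0 + ∑ i ∈ range J, d (i + 1) ≤
        (J + 1) * J + ∑ i ∈ Ico J n, min (J + 1) (d (i + 1)) :=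
      erdosGallaiAt_succ_iff.1 (hEG (J + 1) (by omega) (by omega))
    rcases Nat.eq_zero_or_pos (d 0) with h0 | hk
    · refine ⟨⊥, fun v => ?_⟩
      have := hanti (by simp) v.isLt (Nat.zero_le v)
      simp; omega
    obtain ⟨hkn, hc⟩ :=
      he.le_and_one_le_of_le_sum_min_one hk (by simpa using hEG' 0 (Nat.zero_le n))
    obtain ⟨a, B, hb⟩ := exists_tieBlock he hk hkn
    rw [sum_range_succ', add_comm] at heven
    exact (ih (hb.erdosGallaiCond_layOff hc hek hEG' heven) (hb.antitoneOn_layOff he)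
      (hb.even_sum_layOff hc heven)).attachVertex _ hb.layOffSet_subset
      (card_layOffSet hb.lt_k.le hb.k_le).symm fun i _ => (hb.layOff_add_indicator hc i).symm

theorem erdos_gallai_general (n : ℕ) (d m : ℕ → ℕ)
    (hrearr : ∃ σ : Equiv.Perm (Fin n), ∀ i : Fin n, m (i : ℕ) = d ((σ i : Fin n) : ℕ))
    (hanti : ∀ a b, a ≤ b → b < n → m b ≤ m a) :
    Graphical n d ↔ Even (∑ i ∈ Finset.range n, d i) ∧ ErdosGallaiCond n m := by
  obtain ⟨σ, hσ⟩ := hrearr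
  have hsum : ∑ i ∈ range n, m i = ∑ i ∈ range n, d i := by
    rw [← Fin.sum_univ_eq_sum_range, ← Fin.sum_univ_eq_sum_range, sum_congr rfl fun i _ => hσ i]
    exact Equiv.sum_comp σ (fun i => d i)
  have hdm (i : Fin n) : d i = m (σ.symm i) := by rw [hσ, σ.apply_symm_apply]
  refine ⟨fun h => ⟨h.even_sum, (h.of_perm σ hσ).erdosGallaiCond⟩, fun ⟨heven, hEG⟩ => ?_⟩
  exact (hEG.graphical (fun a ha b hb hab => hanti a b hab hb) (hsum ▸ heven)).of_perm σ.symm hdm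

/-- Erdős–Gallai theorem: a sequence of positive integers is graphical iff its total sum is
even and its decreasing rearrangement satisfies the Erdős–Gallai condition. -/
theorem erdos_gallai (n : ℕ) (hn : 1 ≤ n) (d m : ℕ → ℕ)
    (hpos : ∀ i, i < n → 1 ≤ d i)
    (hrearr : ∃ σ : Equiv.Perm (Fin n), ∀ i : Fin n, m (i : ℕ) = d ((σ i : Fin n) : ℕ))
    (hanti : ∀ a b, a ≤ b → b < n → m b ≤ m a) :
    Graphical n d ↔ Even (∑ i ∈ Finset.range n, d i) ∧ ErdosGallaiCond n m :=
  erdos_gallai_general n d m hrearr hanti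
end

section
/- Let D, D_1, D_2, … be i.i.d. positive-integer-valued random variables with 0 < P(D is even) < 1. If lim_{n→∞} n·P(D ≥ n) = ∞, then lim_{n→∞} P((D_1, …, D_n) is graphical) = 0. -/
open MeasureTheory ProbabilityTheory Filter

/-- Part (a): if `D, D_1, D_2, …` are i.i.d. positive-integer-valued with
`0 < P(D even) < 1` and `n · P(D ≥ n) → ∞`, then `P((D_1,…,D_n) graphical) → 0`. -/
theorem graphical_tendsto_zero_of_heavy_tail {Ω : Type*} [MeasurableSpace Ω]
    (μ : Measure Ω) [IsProbabilityMeasure μ]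
    (D : ℕ → Ω → ℕ) (hmeas : ∀ i, Measurable (D i))
    (hindep : iIndepFun D μ)
    (hident : ∀ i, IdentDistrib (D i) (D 0) μ μ)
    (hpos : ∀ i ω, 1 ≤ D i ω)
    (h0 : 0 < μ {ω | Even (D 0 ω)}) (h1 : μ {ω | Even (D 0 ω)} < 1)
    (htail : Tendsto (fun n : ℕ => (n : ℝ) * (μ {ω | n ≤ D 0 ω}).toReal) atTop atTop) :
    Tendsto (fun n => μ {ω | Graphical n (fun i => D i ω)}) atTop (nhds 0) := by
  set p : ℕ → ℝ := fun n => (μ {ω | n ≤ D 0 ω}).toReal with hp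
  -- tail sets are measurable
  have hIci : ∀ n : ℕ, {ω | n ≤ D 0 ω} = D 0 ⁻¹' Set.Ici n := fun n => rfl
  have hple : ∀ n, p n ≤ 1 := fun n => by
    simpa using ENNReal.toReal_mono ENNReal.one_ne_top (prob_le_one (μ := μ))
  have hpnonneg : ∀ n, 0 ≤ p n := fun n => ENNReal.toReal_nonneg
  -- measure of {D 0 < n}
  have hcompl : ∀ n : ℕ, μ {ω | D 0 ω < n} = ENNReal.ofReal (1 - p n) := by
    intro n
    have hms : MeasurableSet {ω | n ≤ D 0 ω} := (hmeas 0) measurableSet_Ici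
    have hc : {ω | D 0 ω < n} = {ω | n ≤ D 0 ω}ᶜ := by
      ext ω; simp [not_le]
    rw [hc, prob_compl_eq_one_sub hms, ENNReal.ofReal_sub _ (hpnonneg n), ENNReal.ofReal_one]
    simp [hp, ENNReal.ofReal_toReal (measure_ne_top μ _)]
  -- inclusion: graphical implies all degrees < n
  have hsub : ∀ n : ℕ, {ω | Graphical n (fun i => D i ω)} ⊆
      ⋂ i ∈ Finset.range n, D i ⁻¹' Set.Iio n := by
    intro n ω hω
    obtain ⟨G, hG⟩ := hω
    simp only [Set.mem_iInter, Finset.mem_range]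
    intro i hi
    have hv := hG ⟨i, hi⟩
    have hss : G.neighborSet ⟨i, hi⟩ ⊂ Set.univ := by
      rw [Set.ssubset_univ_iff]
      intro hu
      have : (⟨i, hi⟩ : Fin n) ∈ G.neighborSet ⟨i, hi⟩ := hu ▸ Set.mem_univ _
      exact G.irrefl this
    have hlt : (G.neighborSet ⟨i, hi⟩).ncard < n := by
      have := Set.ncard_lt_ncard hss Set.finite_univ
      simpa [Set.ncard_univ] using this
    have hv' : (G.neighborSet ⟨i, hi⟩).ncard = D i ω := hv
    exact Set.mem_preimage.mpr (Set.mem_Iio.mpr (hv' ▸ hlt))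
  -- independence product bound
  have hbound : ∀ n : ℕ, μ {ω | Graphical n (fun i => D i ω)} ≤
      ENNReal.ofReal (1 - p n) ^ n := by
    intro n
    refine le_trans (measure_mono (hsub n)) ?_
    have hprod : μ (⋂ i ∈ Finset.range n, D i ⁻¹' Set.Iio n)
        = ∏ i ∈ Finset.range n, μ (D i ⁻¹' Set.Iio n) := by
      refine hindep.meas_biInter (fun i _ => ?_)
      exact ⟨Set.Iio n, trivial, rfl⟩
    rw [hprod]
    have heach : ∀ i, μ (D i ⁻¹' Set.Iio n) = ENNReal.ofReal (1 - p n) := by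
      intro i
      have := (hident i).measure_mem_eq (s := Set.Iio n) trivial
      rw [this, ← hcompl n]
      rfl
    exact le_of_eq (by
      rw [Finset.prod_congr rfl fun i _ => heach i, Finset.prod_const, Finset.card_range])
  -- real bound via exp
  have hexp : ∀ n : ℕ, ENNReal.ofReal (1 - p n) ^ n ≤
      ENNReal.ofReal (Real.exp (-((n : ℝ) * p n))) := by
    intro n
    rw [← ENNReal.ofReal_pow (by linarith [hple n])]
    refine ENNReal.ofReal_le_ofReal ?_
    have h1e : 1 - p n ≤ Real.exp (-(p n)) := by
      have := Real.add_one_le_exp (-(p n))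
      linarith
    calc (1 - p n) ^ n ≤ Real.exp (-(p n)) ^ n :=
          pow_le_pow_left₀ (by linarith [hple n]) h1e n
      _ = Real.exp (-((n : ℝ) * p n)) := by
          rw [← Real.exp_nat_mul]; ring_nf
  -- the exp bound tends to 0
  have htend : Tendsto (fun n : ℕ => ENNReal.ofReal (Real.exp (-((n : ℝ) * p n))))
      atTop (nhds 0) := by
    have h1 : Tendsto (fun n : ℕ => -((n : ℝ) * p n)) atTop atBot :=
      tendsto_neg_atBot_iff.mpr htail
    have h2 : Tendsto (fun n : ℕ => Real.exp (-((n : ℝ) * p n))) atTop (nhds 0) :=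
      Real.tendsto_exp_atBot.comp h1
    have := (ENNReal.continuous_ofReal.tendsto 0).comp h2
    rwa [ENNReal.ofReal_zero] at this
  refine tendsto_of_tendsto_of_tendsto_of_le_of_le tendsto_const_nhds htend
    (fun n => zero_le) (fun n => le_trans (hbound n) (hexp n))
end

section
/- Let D, D_1, D_2, … be i.i.d. positive-integer-valued random variables with 0 < P(D is even) < 1. Suppose lim_{n→∞} n·P(D ≥ n) = c for some 0 < c < ∞, and that the partial sums Σ_{n=1}^N [c/n − P(D ≥ n)] tend to +∞ as N → ∞. Then lim_{n→∞} P((D_1, …, D_n) is graphical) = 0. -/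
open MeasureTheory ProbabilityTheory Filter

open Finset
open scoped ENNReal

section GraphAux

lemma deg_sum_bound {V : Type*} [Fintype V] [DecidableEq V] (G : SimpleGraph V)
    [DecidableRel G.Adj] (A : Finset V) :
    ∑ v ∈ A, G.degree v ≤ A.card * (A.card - 1) + ∑ u ∈ Aᶜ, min (G.degree u) A.card := by
  have hsplit : ∀ v, G.degree v =
      ((G.neighborFinset v).filter (· ∈ A)).card +
      ((G.neighborFinset v).filter (· ∉ A)).card := by
    intro v
    rw [Finset.card_filter_add_card_filter_not, G.card_neighborFinset_eq_degree]
  have hcross : ∀ v, (G.neighborFinset v).filter (· ∉ A) = Aᶜ.filter (G.Adj v) := by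
    intro v
    ext u
    simp only [Finset.mem_filter, SimpleGraph.mem_neighborFinset, Finset.mem_compl]
    tauto
  calc ∑ v ∈ A, G.degree v
      = ∑ v ∈ A, (((G.neighborFinset v).filter (· ∈ A)).card +
          ((G.neighborFinset v).filter (· ∉ A)).card) :=
        Finset.sum_congr rfl fun v _ => hsplit v
    _ ≤ ∑ v ∈ A, (A.card - 1) + ∑ v ∈ A, ((G.neighborFinset v).filter (· ∉ A)).card := by
        rw [← Finset.sum_add_distrib]
        refine Finset.sum_le_sum fun v hv => ?_
        gcongr
        have hsub : (G.neighborFinset v).filter (· ∈ A) ⊆ A.erase v := by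
          intro u hu
          simp only [Finset.mem_filter, SimpleGraph.mem_neighborFinset] at hu
          exact Finset.mem_erase.2 ⟨(G.ne_of_adj hu.1).symm, hu.2⟩
        simpa [Finset.card_erase_of_mem hv] using Finset.card_le_card hsub
    _ ≤ A.card * (A.card - 1) + ∑ u ∈ Aᶜ, min (G.degree u) A.card := by
        gcongr ?_ + ?_
        · simp [Finset.sum_const, mul_comm]
        · calc ∑ v ∈ A, ((G.neighborFinset v).filter (· ∉ A)).card
              = ∑ v ∈ A, ∑ u ∈ Aᶜ, (if G.Adj v u then 1 else 0) := by
                refine Finset.sum_congr rfl fun v _ => ?_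
                rw [hcross v, Finset.card_filter]
            _ = ∑ u ∈ Aᶜ, ∑ v ∈ A, (if G.Adj u v then 1 else 0) := by
                rw [Finset.sum_comm]
                refine Finset.sum_congr rfl fun u _ => Finset.sum_congr rfl fun v _ => ?_
                simp [G.adj_comm]
            _ = ∑ u ∈ Aᶜ, (A.filter (G.Adj u)).card := by
                refine Finset.sum_congr rfl fun u _ => ?_
                rw [Finset.card_filter]
            _ ≤ ∑ u ∈ Aᶜ, min (G.degree u) A.card := by
                refine Finset.sum_le_sum fun u _ => le_min ?_ ?_
                · rw [← G.card_neighborFinset_eq_degree]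
                  refine Finset.card_le_card fun x hx => ?_
                  simp only [Finset.mem_filter, SimpleGraph.mem_neighborFinset] at hx ⊢
                  exact hx.2
                · exact Finset.card_le_card (Finset.filter_subset _ _)

lemma graphical_key {n k t : ℕ} (htn : t ≤ n) {d : ℕ → ℕ} (hg : Graphical n d)
    (hcnt : ((Finset.range n).filter (fun i => t + 1 ≤ d i)).card ≤ k) :
    ∑ i ∈ Finset.range n, (min (d i) n - min (d i) t)
      ≤ k * k + ∑ i ∈ Finset.range n, min (d i) k := by
  obtain ⟨G, hG⟩ := hg
  letI : DecidableRel G.Adj := Classical.decRel _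
  have hdeg : ∀ v : Fin n, G.degree v = d (v : ℕ) := by
    intro v
    rw [← hG v, SimpleGraph.degree, SimpleGraph.neighborFinset_def,
      ← Set.ncard_eq_toFinset_card']
  have hdlt : ∀ v : Fin n, d (v : ℕ) < n := by
    intro v
    rw [← hdeg v]
    simpa using G.degree_lt_card_verts v
  set A : Finset (Fin n) := Finset.univ.filter (fun v => t + 1 ≤ d (v : ℕ)) with hAdef
  have hAcard : A.card ≤ k := by
    have : A.card = ((Finset.range n).filter (fun i => t + 1 ≤ d i)).card := by
      rw [Finset.card_filter, Finset.card_filter, Fin.sum_univ_eq_sum_range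
        (fun i => if t + 1 ≤ d i then 1 else 0)]
    omega
  calc ∑ i ∈ Finset.range n, (min (d i) n - min (d i) t)
      = ∑ v : Fin n, (min (d (v : ℕ)) n - min (d (v : ℕ)) t) :=
        (Fin.sum_univ_eq_sum_range (fun i => min (d i) n - min (d i) t) n).symm
    _ = ∑ v ∈ A, (min (d (v : ℕ)) n - min (d (v : ℕ)) t) := by
        refine (Finset.sum_subset (Finset.subset_univ A) fun v _ hv => ?_).symm
        simp only [hAdef, Finset.mem_filter, Finset.mem_univ, true_and, not_le] at hv
        have : min (d (v : ℕ)) t = d (v : ℕ) := min_eq_left (by omega)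
        omega
    _ ≤ ∑ v ∈ A, G.degree v := by
        refine Finset.sum_le_sum fun v _ => ?_
        rw [hdeg v]
        omega
    _ ≤ A.card * (A.card - 1) + ∑ u ∈ Aᶜ, min (G.degree u) A.card := deg_sum_bound G A
    _ ≤ k * k + ∑ u : Fin n, min (d (u : ℕ)) k := by
        gcongr ?_ + ?_
        · exact Nat.mul_le_mul hAcard (le_trans (Nat.sub_le _ _) hAcard)
        · refine le_trans (Finset.sum_le_sum fun u _ => ?_)
            (Finset.sum_le_sum_of_subset (Finset.subset_univ Aᶜ))
          rw [hdeg u]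
          exact min_le_min le_rfl hAcard
    _ = k * k + ∑ i ∈ Finset.range n, min (d i) k := by
        rw [Fin.sum_univ_eq_sum_range (fun i => min (d i) k) n]

end GraphAux

section ProbAux

variable {Ω : Type*} [MeasurableSpace Ω] {μ : Measure Ω} [IsProbabilityMeasure μ]

lemma integrable_of_bounded' {f : Ω → ℝ} (hf : Measurable f) (C : ℝ) (h : ∀ ω, |f ω| ≤ C) :
    Integrable f μ :=
  memLp_one_iff_integrable.mp <| MemLp.of_bound hf.aestronglyMeasurable C
    (Filter.Eventually.of_forall (by simpa [Real.norm_eq_abs] using h))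

lemma memℒp_two_of_bounded' {f : Ω → ℝ} (hf : Measurable f) (C : ℝ) (h : ∀ ω, |f ω| ≤ C) :
    MemLp f 2 μ :=
  MemLp.of_bound hf.aestronglyMeasurable C
    (Filter.Eventually.of_forall (by simpa [Real.norm_eq_abs] using h))

omit [IsProbabilityMeasure μ] in
lemma integral_ite_le {X : Ω → ℕ} (hX : Measurable X) (j : ℕ) :
    ∫ ω, (if j ≤ X ω then (1 : ℝ) else 0) ∂μ = (μ {ω | j ≤ X ω}).toReal := by
  have hs : MeasurableSet {ω | j ≤ X ω} := hX measurableSet_Ici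
  have heq : (fun ω => if j ≤ X ω then (1 : ℝ) else 0)
      = Set.indicator {ω | j ≤ X ω} (fun _ => (1 : ℝ)) := by
    ext ω; simp [Set.indicator_apply, Set.mem_setOf_eq]
  rw [heq, integral_indicator_const (1 : ℝ) hs]
  simp
  rfl

lemma integral_min_eq {X : Ω → ℕ} (hX : Measurable X) (m : ℕ) :
    ∫ ω, ((min (X ω) m : ℕ) : ℝ) ∂μ = ∑ j ∈ Icc 1 m, (μ {ω | j ≤ X ω}).toReal := by
  have heq : ∀ ω, ((min (X ω) m : ℕ) : ℝ)
      = ∑ j ∈ Icc 1 m, (if j ≤ X ω then (1 : ℝ) else 0) := by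
    intro ω
    have h1 : ∑ j ∈ Icc 1 m, (if j ≤ X ω then (1 : ℝ) else 0)
        = (((Icc 1 m).filter (fun j => j ≤ X ω)).card : ℝ) := by rw [Finset.sum_boole]
    have h2 : (Icc 1 m).filter (fun j => j ≤ X ω) = Icc 1 (min (X ω) m) := by
      ext j; simp only [Finset.mem_filter, Finset.mem_Icc, le_min_iff]; omega
    rw [h1, h2, Nat.card_Icc]; simp
  simp_rw [heq]
  rw [integral_finset_sum]
  · exact Finset.sum_congr rfl fun j _ => integral_ite_le hX j
  · intro j _
    refine integrable_of_bounded' ?_ 1 ?_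
    · exact Measurable.ite (hX measurableSet_Ici) measurable_const measurable_const
    · intro ω; split <;> simp

lemma integral_min_sq_le {X : Ω → ℕ} (hX : Measurable X) (m : ℕ) :
    ∫ ω, ((min (X ω) m : ℕ) : ℝ) ^ 2 ∂μ
      ≤ ∑ j ∈ Icc 1 m, 2 * (j : ℝ) * (μ {ω | j ≤ X ω}).toReal := by
  have heq : ∀ ω, ((min (X ω) m : ℕ) : ℝ) ^ 2
      = ∑ j ∈ Icc 1 m, (if j ≤ X ω then ((2 * j - 1 : ℕ) : ℝ) else 0) := by
    intro ω
    have h1 : ∑ j ∈ Icc 1 m, (if j ≤ X ω then ((2 * j - 1 : ℕ) : ℝ) else 0)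
        = ∑ j ∈ (Icc 1 m).filter (fun j => j ≤ X ω), ((2 * j - 1 : ℕ) : ℝ) := by
      rw [Finset.sum_filter]
    have h2 : (Icc 1 m).filter (fun j => j ≤ X ω) = Icc 1 (min (X ω) m) := by
      ext j; simp only [Finset.mem_filter, Finset.mem_Icc, le_min_iff]; omega
    have h3 : ∑ j ∈ Icc 1 (min (X ω) m), (2 * j - 1) = (min (X ω) m) ^ 2 := by
      induction (min (X ω) m) with
      | zero => simp
      | succ s ih =>
          rw [Finset.sum_Icc_succ_top (by omega : 1 ≤ s + 1), ih]
          ring_nf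
          omega
    rw [h1, h2, ← Nat.cast_sum, h3, Nat.cast_pow]
  calc ∫ ω, ((min (X ω) m : ℕ) : ℝ) ^ 2 ∂μ
      = ∑ j ∈ Icc 1 m, ((2 * j - 1 : ℕ) : ℝ) * (μ {ω | j ≤ X ω}).toReal := by
        simp_rw [heq]
        rw [integral_finset_sum]
        · refine Finset.sum_congr rfl fun j _ => ?_
          have : (fun ω => if j ≤ X ω then ((2 * j - 1 : ℕ) : ℝ) else 0)
              = fun ω => ((2 * j - 1 : ℕ) : ℝ) * (if j ≤ X ω then (1 : ℝ) else 0) := by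
            ext ω; split <;> simp
          rw [this, integral_const_mul, integral_ite_le hX j]
        · intro j _
          refine integrable_of_bounded' ?_ ((2 * j - 1 : ℕ) : ℝ) ?_
          · exact Measurable.ite (hX measurableSet_Ici) measurable_const measurable_const
          · intro ω
            split <;> simp [abs_of_nonneg]
    _ ≤ ∑ j ∈ Icc 1 m, 2 * (j : ℝ) * (μ {ω | j ≤ X ω}).toReal := by
        refine Finset.sum_le_sum fun j _ => ?_
        have h4 : ((2 * j - 1 : ℕ) : ℝ) ≤ 2 * (j : ℝ) := by
          calc ((2 * j - 1 : ℕ) : ℝ) ≤ ((2 * j : ℕ) : ℝ) :=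
                Nat.cast_le.mpr (Nat.sub_le (2 * j) 1)
            _ = 2 * (j : ℝ) := by push_cast; ring
        exact mul_le_mul_of_nonneg_right h4 ENNReal.toReal_nonneg

/-- Chebyshev's inequality for a sum of iid bounded functions of `D i`. -/
lemma iid_sum_chebyshev
    (D : ℕ → Ω → ℕ) (hmeas : ∀ i, Measurable (D i))
    (hindep : iIndepFun D μ)
    (hident : ∀ i, IdentDistrib (D i) (D 0) μ μ)
    (f : ℕ → ℝ) (n : ℕ) (B : ℝ) (hB : ∀ x, |f x| ≤ B)
    {a : ℝ} (ha : 0 < a) :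
    μ {ω | a ≤ |(∑ i ∈ Finset.range n, f (D i ω)) - n * ∫ ω, f (D 0 ω) ∂μ|}
      ≤ ENNReal.ofReal (n * (∫ ω, (f (D 0 ω)) ^ 2 ∂μ) / a ^ 2) := by
  set X : ℕ → Ω → ℝ := fun i => f ∘ D i with hX
  have hXmeas : ∀ i, Measurable (X i) := fun i => measurable_from_nat.comp (hmeas i)
  have hXmem : ∀ i, MemLp (X i) 2 μ := fun i => memℒp_two_of_bounded' (hXmeas i) B
    (fun ω => hB (D i ω))
  have hXident : ∀ i, IdentDistrib (X i) (X 0) μ μ := fun i =>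
    (hident i).comp (measurable_from_nat (f := f))
  set S : Ω → ℝ := fun ω => ∑ i ∈ Finset.range n, X i ω with hS
  have hSsum : S = ∑ i ∈ Finset.range n, X i := by
    ext ω; simp [hS, Finset.sum_apply]
  have hSmem : MemLp S 2 μ := by
    rw [hSsum]; exact memLp_finset_sum' _ (fun i _ => hXmem i)
  have hES : μ[S] = n * ∫ ω, X 0 ω ∂μ := by
    rw [hS]
    rw [integral_finset_sum _ (fun i _ => (hXmem i).integrable one_le_two)]
    rw [Finset.sum_congr rfl fun i _ => (hXident i).integral_eq]
    simp [mul_comm]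
  have hVar : variance S μ ≤ n * ∫ ω, (X 0 ω) ^ 2 ∂μ := by
    rw [hSsum]
    rw [IndepFun.variance_sum (fun i _ => hXmem i)
      (fun i _ j _ hij => (hindep.indepFun hij).comp
        (measurable_from_nat (f := f)) (measurable_from_nat (f := f)))]
    have hle : ∀ i ∈ Finset.range n, variance (X i) μ ≤ ∫ ω, (X 0 ω) ^ 2 ∂μ := by
      intro i _
      rw [(hXident i).variance_eq]
      have := variance_le_expectation_sq (μ := μ) (hXmeas 0).aestronglyMeasurable
      simpa [Pi.pow_apply] using this
    calc ∑ i ∈ Finset.range n, variance (X i) μ ≤ ∑ _i ∈ Finset.range n, ∫ ω, (X 0 ω) ^ 2 ∂μ :=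
          Finset.sum_le_sum hle
      _ = n * ∫ ω, (X 0 ω) ^ 2 ∂μ := by simp [mul_comm]
  have hcheb := meas_ge_le_variance_div_sq (μ := μ) hSmem ha
  rw [hES] at hcheb
  refine le_trans (le_of_eq ?_) (le_trans hcheb (ENNReal.ofReal_le_ofReal ?_))
  · rfl
  · exact div_le_div_of_nonneg_right hVar (by positivity) |>.trans_eq rfl |> (fun h => h)

end ProbAux


set_option maxHeartbeats 2000000 in
/-- Part (b): if `D, D_1, D_2, …` are i.i.d. positive-integer-valued with
`0 < P(D even) < 1`, `n · P(D ≥ n) → c ∈ (0,∞)` and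
`∑_{n=1}^N (c/n − P(D ≥ n)) → ∞`, then `P((D_1,…,D_n) graphical) → 0`. -/
theorem graphical_tendsto_zero_of_divergent_sum {Ω : Type*} [MeasurableSpace Ω]
    (μ : Measure Ω) [IsProbabilityMeasure μ]
    (D : ℕ → Ω → ℕ) (hmeas : ∀ i, Measurable (D i))
    (hindep : iIndepFun D μ)
    (hident : ∀ i, IdentDistrib (D i) (D 0) μ μ)
    (hpos : ∀ i ω, 1 ≤ D i ω)
    (h0 : 0 < μ {ω | Even (D 0 ω)}) (h1 : μ {ω | Even (D 0 ω)} < 1)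
    (c : ℝ) (hc : 0 < c)
    (htail : Tendsto (fun n : ℕ => (n : ℝ) * (μ {ω | n ≤ D 0 ω}).toReal) atTop (nhds c))
    (hdiv : Tendsto
      (fun N : ℕ => ∑ n ∈ Finset.Icc 1 N, (c / n - (μ {ω | n ≤ D 0 ω}).toReal))
      atTop atTop) :
    Tendsto (fun n => μ {ω | Graphical n (fun i => D i ω)}) atTop (nhds 0) := by
  classical
  -- notation
  set p : ℕ → ℝ := fun j => (μ {ω | j ≤ D 0 ω}).toReal with hpdef
  have hp_nonneg : ∀ j, 0 ≤ p j := fun j => ENNReal.toReal_nonneg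
  have hp_le_one : ∀ j, p j ≤ 1 := by
    intro j
    have h1' : (μ {ω | j ≤ D 0 ω}).toReal ≤ (1 : ℝ≥0∞).toReal :=
      ENNReal.toReal_mono ENNReal.one_ne_top prob_le_one
    simpa using h1'
  have hp_anti : ∀ {j l : ℕ}, j ≤ l → p l ≤ p j := by
    intro j l hjl
    exact ENNReal.toReal_mono (measure_ne_top μ _)
      (measure_mono fun ω hω => le_trans hjl hω)
  -- uniform tail bound constant
  obtain ⟨M, hM⟩ : ∃ M : ℕ, ∀ j ≥ M, (j : ℝ) * p j < c + 1 :=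
    eventually_atTop.mp (htail.eventually (eventually_lt_nhds (lt_add_one c)))
  set C' : ℝ := max (c + 1) M with hC'def
  have hC'_pos : 0 < C' := lt_of_lt_of_le (by linarith) (le_max_left _ _)
  have hC'_one : 1 ≤ C' := le_trans (by linarith) (le_max_left _ _)
  have hC' : ∀ j : ℕ, (j : ℝ) * p j ≤ C' := by
    intro j
    rcases le_or_gt M j with h | h
    · exact le_trans (hM j h).le (le_max_left _ _)
    · have h1' : (j : ℝ) * p j ≤ j := by
        nth_rewrite 2 [← mul_one (j : ℝ)]
        exact mul_le_mul_of_nonneg_left (hp_le_one j) (Nat.cast_nonneg j)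
      exact le_trans h1' (le_trans (Nat.cast_le.mpr h.le) (le_max_right _ _))
  set C : ℕ := ⌈2 * C'⌉₊ with hCdef
  have hCge : 2 * C' ≤ (C : ℝ) := Nat.le_ceil _
  have hC2 : 2 ≤ C := by
    have : (2 : ℝ) ≤ C := le_trans (by linarith) hCge
    exact_mod_cast this
  have hCpos : 0 < C := by omega
  -- harmonic-type sums
  set H : ℕ → ℝ := fun m => ∑ j ∈ Icc 1 m, (j : ℝ)⁻¹ with hHdef
  have hHcast : ∀ m : ℕ, ((harmonic m : ℚ) : ℝ) = H m := by
    intro m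
    simp only [harmonic_eq_sum_Icc, hHdef, Rat.cast_sum, Rat.cast_inv, Rat.cast_natCast]
  have hH_low : ∀ m : ℕ, Real.log (m + 1) ≤ H m := by
    intro m
    have := log_add_one_le_harmonic m
    rw [hHcast] at this
    simpa using this
  have hH_up : ∀ m : ℕ, H m ≤ 1 + Real.log m := by
    intro m
    have := harmonic_le_one_add_log m
    rw [hHcast] at this
    exact this
  set r : ℕ → ℝ := fun N => ∑ j ∈ Icc 1 N, (c / j - p j) with hrdef
  have hrdiv : Tendsto r atTop atTop := hdiv
  have hr_eq : ∀ N, r N = c * H N - ∑ j ∈ Icc 1 N, p j := by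
    intro N
    show ∑ j ∈ Icc 1 N, (c / (j : ℝ) - p j)
      = c * (∑ j ∈ Icc 1 N, ((j : ℝ))⁻¹) - ∑ j ∈ Icc 1 N, p j
    simp only [div_eq_mul_inv]
    rw [Finset.sum_sub_distrib, Finset.mul_sum]
  set B₀ : ℝ := 2 * c + c * Real.log (2 * C) + 1 with hB₀def
  -- the Icc/Ioc splitting fact
  have hIccIoc : ∀ m : ℕ, Icc 1 m = Ioc 0 m := by
    intro m; ext j; simp only [Finset.mem_Icc, Finset.mem_Ioc]; omega
  -- main quantified claim
  rw [ENNReal.tendsto_atTop_zero]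
  intro ε hε
  by_cases hεtop : ε = ⊤
  · exact ⟨0, fun n _ => hεtop ▸ le_top⟩
  set δ : ℝ := ε.toReal with hδdef
  have hδ : 0 < δ := ENNReal.toReal_pos hε.ne' hεtop
  -- choose k
  obtain ⟨k, hk⟩ := (((eventually_atTop.2 ⟨1, fun _ h => h⟩).and
      ((tendsto_natCast_atTop_atTop (R := ℝ)).eventually_ge_atTop (4 / δ))).and
      ((hrdiv.eventually_ge_atTop (B₀ + 1 + 16 * C' / δ)).and
      (eventually_ge_atTop (2 * C)))).exists
  obtain ⟨⟨hk1, hk4δ⟩, hkr, hk2C⟩ := hk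
  have hk1R : (1 : ℝ) ≤ k := by exact_mod_cast hk1
  have hkpos : (0 : ℝ) < k := by linarith
  set ρ : ℝ := r k - B₀ with hρdef
  have hρ1 : 1 + 16 * C' / δ ≤ ρ := by rw [hρdef]; linarith
  have hρpos : 0 < ρ := by
    have : 0 ≤ 16 * C' / δ := by positivity
    linarith
  -- choose the tail threshold for p j ≥ (c - epsk)/j
  set epsk : ℝ := min c (1 / (1 + Real.log k)) with hepskdef
  have hlogk : 0 ≤ Real.log k := Real.log_nonneg hk1R
  have hepsk_pos : 0 < epsk := lt_min hc (by positivity)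
  have hepsk_le : epsk * (1 + Real.log k) ≤ 1 := by
    have h1' : epsk ≤ 1 / (1 + Real.log k) := min_le_right _ _
    calc epsk * (1 + Real.log k) ≤ (1 / (1 + Real.log k)) * (1 + Real.log k) :=
          mul_le_mul_of_nonneg_right h1' (by linarith)
      _ = 1 := by field_simp
  obtain ⟨Nk, hNk⟩ : ∃ Nk : ℕ, ∀ j ≥ Nk, c - epsk < (j : ℝ) * p j :=
    eventually_atTop.mp (htail.eventually (eventually_gt_nhds (by linarith)))
  -- choose N
  obtain ⟨N, hN⟩ := ((eventually_ge_atTop k).and ((eventually_ge_atTop (k * Nk)).and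
      (((tendsto_natCast_atTop_atTop (R := ℝ)).atTop_mul_const (by positivity : (0:ℝ) < ρ / 2)).eventually_ge_atTop
        ((k : ℝ) * k)))).exists_forall_of_atTop
  refine ⟨N, fun n hn => ?_⟩
  obtain ⟨hnk, hnkNk, hnρ⟩ := hN n hn
  have hnρ' : (k : ℝ) * k ≤ (n : ℝ) * ρ / 2 := by
    calc (k : ℝ) * k ≤ (n : ℝ) * (ρ / 2) := hnρ
      _ = (n : ℝ) * ρ / 2 := by ring
  have hn1 : 1 ≤ n := le_trans hk1 hnk
  have hnposR : (0 : ℝ) < n := by exact_mod_cast hn1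
  -- the threshold t
  set t : ℕ := C * n / k + 1 with htdef
  have hkne : k ≠ 0 := by omega
  have hCnR : (0 : ℝ) < (C : ℝ) * n := by
    have hC1 : (1 : ℝ) ≤ C := by exact_mod_cast (by omega : 1 ≤ C)
    nlinarith
  have ht_low : (C : ℝ) * n / k ≤ t := by
    have h1' : C * n < t * k := by
      have hdm := Nat.div_add_mod (C * n) k
      have hmlt : (C * n) % k < k := Nat.mod_lt _ (by omega)
      calc C * n = k * (C * n / k) + (C * n) % k := hdm.symm
        _ < k * (C * n / k) + k := Nat.add_lt_add_left hmlt _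
        _ = (C * n / k + 1) * k := by ring
        _ = t * k := by rw [htdef]
    have h2' : ((C * n : ℕ) : ℝ) < (t : ℝ) * k := by exact_mod_cast h1'
    rw [div_le_iff₀ hkpos]
    push_cast at h2' ⊢
    linarith
  have hCnk1 : (1 : ℝ) ≤ (C : ℝ) * n / k := by
    rw [le_div_iff₀ hkpos]
    have hC2R : (2 : ℝ) ≤ C := by exact_mod_cast hC2
    have hknR : (k : ℝ) ≤ n := by exact_mod_cast hnk
    nlinarith
  have ht_up : (t : ℝ) ≤ 2 * C * n / k := by
    have h1' : ((C * n / k : ℕ) : ℝ) ≤ (C : ℝ) * n / k := by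
      calc ((C * n / k : ℕ) : ℝ) ≤ ((C * n : ℕ) : ℝ) / k := Nat.cast_div_le
        _ = (C : ℝ) * n / k := by push_cast; ring
    have h2' : (t : ℝ) = ((C * n / k : ℕ) : ℝ) + 1 := by rw [htdef]; push_cast; ring
    rw [h2']
    calc ((C * n / k : ℕ) : ℝ) + 1 ≤ (C : ℝ) * n / k + (C : ℝ) * n / k :=
          add_le_add h1' hCnk1
      _ = 2 * C * n / k := by ring
  have ht1 : 1 ≤ t := by rw [htdef]; exact Nat.succ_le_succ (Nat.zero_le _)
  have htposR : (0 : ℝ) < t := by exact_mod_cast ht1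
  have htn : t ≤ n := by
    have h1' : 2 * (C : ℝ) * n / k ≤ n := by
      rw [div_le_iff₀ hkpos]
      have h2C : (2 : ℝ) * C ≤ k := by exact_mod_cast hk2C
      nlinarith
    have : (t : ℝ) ≤ n := le_trans ht_up h1'
    exact_mod_cast this
  have htNk : Nk ≤ t := by
    have h1' : (Nk : ℝ) ≤ (C : ℝ) * n / k := by
      rw [le_div_iff₀ hkpos]
      have h2' : (k : ℝ) * Nk ≤ n := by exact_mod_cast hnkNk
      have hC1 : (1 : ℝ) ≤ C := by exact_mod_cast (by omega : 1 ≤ C)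
      nlinarith [Nat.cast_nonneg (α := ℝ) Nk, Nat.cast_nonneg (α := ℝ) n]
    have h3' : (Nk : ℝ) ≤ t := le_trans h1' ht_low
    exact_mod_cast h3'
  -- the two test functions
  set f1 : ℕ → ℝ := fun x => if t + 1 ≤ x then (1 : ℝ) else 0 with hf1def
  set f2 : ℕ → ℝ := fun x => ((min x n : ℕ) : ℝ) - ((min x t : ℕ) : ℝ) - ((min x k : ℕ) : ℝ)
    with hf2def
  have hf1B : ∀ x, |f1 x| ≤ 1 := by
    intro x; rw [hf1def]; dsimp only; split <;> simp
  have hf2bounds : ∀ x, -(((min x n : ℕ) : ℝ)) ≤ f2 x ∧ f2 x ≤ ((min x n : ℕ) : ℝ) := by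
    intro x
    have hb : min x t ≤ min x n := min_le_min le_rfl htn
    have he : min x k ≤ min x n := min_le_min le_rfl hnk
    have hbR : ((min x t : ℕ) : ℝ) ≤ ((min x n : ℕ) : ℝ) := Nat.cast_le.mpr hb
    have heR : ((min x k : ℕ) : ℝ) ≤ ((min x n : ℕ) : ℝ) := Nat.cast_le.mpr he
    have h0b : (0 : ℝ) ≤ ((min x t : ℕ) : ℝ) := Nat.cast_nonneg _
    have h0e : (0 : ℝ) ≤ ((min x k : ℕ) : ℝ) := Nat.cast_nonneg _
    rw [hf2def]; dsimp only
    constructor <;> linarith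
  have hf2B : ∀ x, |f2 x| ≤ (n : ℝ) := by
    intro x
    have h := hf2bounds x
    have haR : ((min x n : ℕ) : ℝ) ≤ n := Nat.cast_le.mpr (min_le_right _ _)
    rw [abs_le]; constructor <;> [linarith [h.1]; linarith [h.2]]
  have hf2sq : ∀ x, (f2 x) ^ 2 ≤ ((min x n : ℕ) : ℝ) ^ 2 := fun x =>
    sq_le_sq' (hf2bounds x).1 (hf2bounds x).2
  -- integrability helpers
  have hintmin : ∀ m : ℕ, Integrable (fun ω => ((min (D 0 ω) m : ℕ) : ℝ)) μ := by
    intro m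
    refine integrable_of_bounded'
      (Measurable.comp (g := fun x : ℕ => ((min x m : ℕ) : ℝ)) (f := D 0)
        measurable_from_nat (hmeas 0))
      m (fun ω => ?_)
    rw [abs_of_nonneg (Nat.cast_nonneg _)]
    exact Nat.cast_le.mpr (min_le_right _ _)
  -- first moment computations
  have hE1 : ∫ ω, f1 (D 0 ω) ∂μ = p (t + 1) := integral_ite_le (hmeas 0) (t + 1)
  have hE1sq : ∫ ω, (f1 (D 0 ω)) ^ 2 ∂μ = p (t + 1) := by
    have hptw : ∀ ω, (f1 (D 0 ω)) ^ 2 = f1 (D 0 ω) := by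
      intro ω; rw [hf1def]; dsimp only; split <;> norm_num
    rw [integral_congr_ae (Filter.Eventually.of_forall hptw), hE1]
  have hminint : ∀ m : ℕ, ∫ ω, ((min (D 0 ω) m : ℕ) : ℝ) ∂μ = ∑ j ∈ Icc 1 m, p j :=
    fun m => integral_min_eq (hmeas 0) m
  have hE2 : ∫ ω, f2 (D 0 ω) ∂μ = ∑ j ∈ Ioc t n, p j - ∑ j ∈ Icc 1 k, p j := by
    have hpt : ∀ ω, f2 (D 0 ω) = ((min (D 0 ω) n : ℕ) : ℝ) - ((min (D 0 ω) t : ℕ) : ℝ)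
        - ((min (D 0 ω) k : ℕ) : ℝ) := fun ω => by rw [hf2def]
    rw [integral_congr_ae (Filter.Eventually.of_forall hpt)]
    have hint_nt : Integrable
        (fun ω => ((min (D 0 ω) n : ℕ) : ℝ) - ((min (D 0 ω) t : ℕ) : ℝ)) μ :=
      (hintmin n).sub (hintmin t)
    rw [integral_sub hint_nt (hintmin k),
        integral_sub (hintmin n) (hintmin t), hminint n, hminint t, hminint k]
    have hsplit : ∑ j ∈ Icc 1 t, p j + ∑ j ∈ Ioc t n, p j = ∑ j ∈ Icc 1 n, p j := by
      rw [hIccIoc n, hIccIoc t]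
      exact Finset.sum_Ioc_consecutive _ (Nat.zero_le t) htn
    linarith
  -- lower bound for the mean of f2
  have hE2low : ρ ≤ ∫ ω, f2 (D 0 ω) ∂μ := by
    rw [hE2]
    set W : ℝ := ∑ j ∈ Ioc t n, (j : ℝ)⁻¹ with hWdef
    have hW_eq : H t + W = H n := by
      show (∑ j ∈ Icc 1 t, (j : ℝ)⁻¹) + ∑ j ∈ Ioc t n, (j : ℝ)⁻¹ = ∑ j ∈ Icc 1 n, (j : ℝ)⁻¹
      rw [hIccIoc n, hIccIoc t]
      exact Finset.sum_Ioc_consecutive _ (Nat.zero_le t) htn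
    have hWnonneg : 0 ≤ W := Finset.sum_nonneg fun j _ => by positivity
    have hlogt_up : Real.log t ≤ Real.log (2 * C) + Real.log n - Real.log k := by
      have h1' : Real.log t ≤ Real.log (2 * C * n / k) := Real.log_le_log htposR ht_up
      rw [Real.log_div (by positivity) (by positivity), Real.log_mul (by positivity)
        (by positivity), Real.log_mul (by norm_num) (by positivity)] at h1'
      have h2'' : Real.log (2 * (C : ℝ)) = Real.log 2 + Real.log C :=
        Real.log_mul (by norm_num) (by positivity)
      linarith
    have hlogt_low : Real.log n - Real.log k ≤ Real.log t := by
      have h0' : (0 : ℝ) < (n : ℝ) / k := by positivity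
      have h1' : (n : ℝ) / k ≤ (C : ℝ) * n / k := by
        have hC1 : (1 : ℝ) ≤ C := by exact_mod_cast (by omega : 1 ≤ C)
        rw [div_le_div_iff₀ hkpos hkpos]
        nlinarith [mul_le_mul_of_nonneg_right hC1 (mul_nonneg hnposR.le hkpos.le)]
      have h2' : Real.log ((n : ℝ) / k) ≤ Real.log t :=
        Real.log_le_log h0' (le_trans h1' ht_low)
      rw [Real.log_div (by positivity) (by positivity)] at h2'
      linarith
    have hW_low : Real.log k - Real.log (2 * C) - 1 ≤ W := by
      have h1' : Real.log n ≤ Real.log (n + 1) := Real.log_le_log hnposR (by linarith)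
      have h2' : Real.log (n + 1) ≤ H n := by
        have := hH_low n; push_cast at this ⊢; linarith
      have h3' : H t ≤ 1 + Real.log t := hH_up t
      have h4' : W = H n - H t := by linarith
      rw [h4']
      linarith
    have hW_up : W ≤ 1 + Real.log k := by
      have h1' : H n ≤ 1 + Real.log n := hH_up n
      have h2' : Real.log (t + 1) ≤ H t := by
        have := hH_low t; push_cast at this ⊢; linarith
      have h3' : Real.log t ≤ Real.log (t + 1) := Real.log_le_log htposR (by linarith)
      have h4' : W = H n - H t := by linarith
      rw [h4']
      linarith [hlogt_low]
    have hwin : (c - epsk) * W ≤ ∑ j ∈ Ioc t n, p j := by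
      rw [hWdef, Finset.mul_sum]
      refine Finset.sum_le_sum fun j hj => ?_
      have hjmem := Finset.mem_Ioc.mp hj
      have hjNk : Nk ≤ j := le_trans htNk (le_of_lt hjmem.1)
      have hjpos : (0 : ℝ) < j := by
        have : 1 ≤ j := by omega
        exact_mod_cast this
      have h1' := (hNk j hjNk).le
      calc (c - epsk) * (j : ℝ)⁻¹ ≤ ((j : ℝ) * p j) * (j : ℝ)⁻¹ :=
            mul_le_mul_of_nonneg_right h1' (by positivity)
        _ = p j := by field_simp
    have hsum_k : ∑ j ∈ Icc 1 k, p j = c * H k - r k := by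
      have := hr_eq k; linarith
    have hcW : c * (Real.log k - Real.log (2 * C) - 1) ≤ c * W :=
      mul_le_mul_of_nonneg_left hW_low hc.le
    have hepskW : epsk * W ≤ 1 := by
      calc epsk * W ≤ epsk * (1 + Real.log k) :=
            mul_le_mul_of_nonneg_left hW_up hepsk_pos.le
        _ ≤ 1 := hepsk_le
    have hHk : H k ≤ 1 + Real.log k := hH_up k
    have hcHk : c * H k ≤ c * (1 + Real.log k) := mul_le_mul_of_nonneg_left hHk hc.le
    have hexpand : (c - epsk) * W = c * W - epsk * W := by ring
    rw [hρdef, hB₀def]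
    calc r k - (2 * c + c * Real.log (2 * C) + 1)
        ≤ (c - epsk) * W - (c * H k - r k) := by
          rw [hexpand]
          have := hcW
          have := hepskW
          have := hcHk
          nlinarith [hc.le]
      _ ≤ ∑ j ∈ Ioc t n, p j - ∑ j ∈ Icc 1 k, p j := by
          rw [hsum_k]
          linarith [hwin]
  -- second moment bound for f2
  have hE2sq : ∫ ω, (f2 (D 0 ω)) ^ 2 ∂μ ≤ 2 * C' * n := by
    have hint1 : Integrable (fun ω => (f2 (D 0 ω)) ^ 2) μ := by
      refine integrable_of_bounded' ?_ ((n : ℝ) ^ 2) ?_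
      · exact (measurable_from_nat (f := fun x => (f2 x) ^ 2)).comp (hmeas 0)
      · intro ω
        rw [abs_of_nonneg (sq_nonneg _)]
        have := hf2B (D 0 ω)
        nlinarith [abs_nonneg (f2 (D 0 ω)), sq_abs (f2 (D 0 ω)), this]
    have hint2 : Integrable (fun ω => ((min (D 0 ω) n : ℕ) : ℝ) ^ 2) μ := by
      refine integrable_of_bounded' ?_ ((n : ℝ) ^ 2) ?_
      · exact (measurable_from_nat (f := fun x => ((min x n : ℕ) : ℝ) ^ 2)).comp (hmeas 0)
      · intro ω
        rw [abs_of_nonneg (sq_nonneg _)]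
        have h1' : ((min (D 0 ω) n : ℕ) : ℝ) ≤ n := Nat.cast_le.mpr (min_le_right _ _)
        have h0' : (0 : ℝ) ≤ ((min (D 0 ω) n : ℕ) : ℝ) := Nat.cast_nonneg _
        nlinarith
    calc ∫ ω, (f2 (D 0 ω)) ^ 2 ∂μ
        ≤ ∫ ω, ((min (D 0 ω) n : ℕ) : ℝ) ^ 2 ∂μ :=
          integral_mono hint1 hint2 (fun ω => hf2sq (D 0 ω))
      _ ≤ ∑ j ∈ Icc 1 n, 2 * (j : ℝ) * p j := integral_min_sq_le (hmeas 0) n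
      _ ≤ ∑ _j ∈ Icc 1 n, 2 * C' := by
          refine Finset.sum_le_sum fun j _ => ?_
          have := hC' j
          calc 2 * (j : ℝ) * p j = 2 * ((j : ℝ) * p j) := by ring
            _ ≤ 2 * C' := by linarith
      _ = 2 * C' * n := by
          rw [Finset.sum_const, Nat.card_Icc]
          simp [nsmul_eq_mul]
          ring
  -- Chebyshev applications
  have hkhalf : (0 : ℝ) < (k : ℝ) / 2 := by positivity
  have hb1 := iid_sum_chebyshev D hmeas hindep hident f1 n 1 hf1B hkhalf
  have hnρhalf : (0 : ℝ) < (n : ℝ) * ρ / 2 := by positivity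
  have hb2 := iid_sum_chebyshev D hmeas hindep hident f2 n n hf2B hnρhalf
  -- bound the first bad event
  have hnpt : (n : ℝ) * p (t + 1) ≤ (k : ℝ) / 2 := by
    have h1' : p (t + 1) ≤ p t := hp_anti (Nat.le_succ t)
    have h2' : (t : ℝ) * p t ≤ C' := hC' t
    have h3' : p t ≤ C' / t := by
      rw [le_div_iff₀ htposR]; linarith [mul_comm (t : ℝ) (p t)]
    have h4' : (n : ℝ) * p (t + 1) ≤ (n : ℝ) * (C' / t) := by
      have := le_trans h1' h3'
      exact mul_le_mul_of_nonneg_left this (Nat.cast_nonneg n)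
    have h5' : C' / (t : ℝ) ≤ C' / ((C : ℝ) * n / k) :=
      div_le_div_of_nonneg_left hC'_pos.le (by positivity) ht_low
    have h6' : (n : ℝ) * (C' / ((C : ℝ) * n / k)) = C' * k / C := by
      field_simp
    have h7' : C' * k / (C : ℝ) ≤ (k : ℝ) / 2 := by
      rw [div_le_div_iff₀ (by positivity : (0:ℝ) < (C:ℝ)) (by norm_num : (0:ℝ) < 2)]
      calc C' * k * 2 = (2 * C') * k := by ring
        _ ≤ (C : ℝ) * k := mul_le_mul_of_nonneg_right hCge (Nat.cast_nonneg k)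
        _ = (k : ℝ) * C := by ring
    calc (n : ℝ) * p (t + 1) ≤ (n : ℝ) * (C' / t) := h4'
      _ ≤ (n : ℝ) * (C' / ((C : ℝ) * n / k)) :=
          mul_le_mul_of_nonneg_left h5' (Nat.cast_nonneg n)
      _ = C' * k / C := h6'
      _ ≤ (k : ℝ) / 2 := h7'
  have hμB1 : μ {ω | (k : ℝ) / 2 ≤
      |(∑ i ∈ Finset.range n, f1 (D i ω)) - n * ∫ ω, f1 (D 0 ω) ∂μ|}
      ≤ ENNReal.ofReal (δ / 2) := by
    refine le_trans hb1 (ENNReal.ofReal_le_ofReal ?_)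
    rw [hE1sq]
    have h1' : (n : ℝ) * p (t + 1) / ((k : ℝ) / 2) ^ 2 ≤ ((k : ℝ) / 2) / ((k : ℝ) / 2) ^ 2 :=
      div_le_div_of_nonneg_right hnpt (by positivity)
    have h2' : ((k : ℝ) / 2) / ((k : ℝ) / 2) ^ 2 = 2 / k := by
      rw [sq]
      field_simp
    have h3' : (2 : ℝ) / k ≤ 2 / (4 / δ) :=
      div_le_div_of_nonneg_left (by norm_num) (by positivity) hk4δ
    have h4' : (2 : ℝ) / (4 / δ) = δ / 2 := by
      field_simp
      ring
    calc (n : ℝ) * p (t + 1) / ((k : ℝ) / 2) ^ 2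
        ≤ ((k : ℝ) / 2) / ((k : ℝ) / 2) ^ 2 := h1'
      _ = 2 / k := h2'
      _ ≤ 2 / (4 / δ) := h3'
      _ = δ / 2 := h4'
  -- bound the second bad event
  have hμB2 : μ {ω | (n : ℝ) * ρ / 2 ≤
      |(∑ i ∈ Finset.range n, f2 (D i ω)) - n * ∫ ω, f2 (D 0 ω) ∂μ|}
      ≤ ENNReal.ofReal (δ / 2) := by
    refine le_trans hb2 (ENNReal.ofReal_le_ofReal ?_)
    have h1' : (n : ℝ) * (∫ ω, (f2 (D 0 ω)) ^ 2 ∂μ) ≤ 2 * C' * n ^ 2 := by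
      calc (n : ℝ) * (∫ ω, (f2 (D 0 ω)) ^ 2 ∂μ) ≤ (n : ℝ) * (2 * C' * n) :=
            mul_le_mul_of_nonneg_left hE2sq (Nat.cast_nonneg n)
        _ = 2 * C' * n ^ 2 := by ring
    have h2' : ((n : ℝ) * ρ / 2) ^ 2 = (n : ℝ) ^ 2 * ρ ^ 2 / 4 := by ring
    have h3' : (n : ℝ) * (∫ ω, (f2 (D 0 ω)) ^ 2 ∂μ) / ((n : ℝ) * ρ / 2) ^ 2
        ≤ 2 * C' * n ^ 2 / ((n : ℝ) ^ 2 * ρ ^ 2 / 4) := by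
      rw [h2']
      exact div_le_div_of_nonneg_right h1' (by positivity)
    have h4' : 2 * C' * (n : ℝ) ^ 2 / ((n : ℝ) ^ 2 * ρ ^ 2 / 4) = 8 * C' / ρ ^ 2 := by
      field_simp
      ring
    have hρ16 : 16 * C' / δ ≤ ρ := by linarith
    have hρge1 : (1 : ℝ) ≤ ρ := by
      have : 0 ≤ 16 * C' / δ := by positivity
      linarith
    have h5' : 8 * C' / ρ ^ 2 ≤ 8 * C' / ρ := by
      refine div_le_div_of_nonneg_left (by positivity) hρpos ?_
      nlinarith [hρge1, hρpos]
    have h6' : 8 * C' / ρ ≤ 8 * C' / (16 * C' / δ) :=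
      div_le_div_of_nonneg_left (by positivity) (by positivity) hρ16
    have h7' : 8 * C' / (16 * C' / δ) = δ / 2 := by
      rw [div_div_eq_mul_div]
      have hC'ne : C' ≠ 0 := ne_of_gt hC'_pos
      field_simp
      ring
    calc (n : ℝ) * (∫ ω, (f2 (D 0 ω)) ^ 2 ∂μ) / ((n : ℝ) * ρ / 2) ^ 2
        ≤ 2 * C' * n ^ 2 / ((n : ℝ) ^ 2 * ρ ^ 2 / 4) := h3'
      _ = 8 * C' / ρ ^ 2 := h4'
      _ ≤ 8 * C' / ρ := h5'
      _ ≤ 8 * C' / (16 * C' / δ) := h6'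
      _ = δ / 2 := h7'
  -- inclusion of the graphical event in the two bad events
  have hincl : {ω | Graphical n (fun i => D i ω)} ⊆
      {ω | (k : ℝ) / 2 ≤
        |(∑ i ∈ Finset.range n, f1 (D i ω)) - n * ∫ ω, f1 (D 0 ω) ∂μ|} ∪
      {ω | (n : ℝ) * ρ / 2 ≤
        |(∑ i ∈ Finset.range n, f2 (D i ω)) - n * ∫ ω, f2 (D 0 ω) ∂μ|} := by
    intro ω hω
    by_cases hB1 : (k : ℝ) / 2 ≤
        |(∑ i ∈ Finset.range n, f1 (D i ω)) - n * ∫ ω, f1 (D 0 ω) ∂μ|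
    · exact Or.inl hB1
    right
    -- from ¬B1, the count of large values is at most k
    have hcount : (((Finset.range n).filter (fun i => t + 1 ≤ D i ω)).card : ℝ) < k := by
      push_neg at hB1
      have hS1 : (∑ i ∈ Finset.range n, f1 (D i ω))
          = (((Finset.range n).filter (fun i => t + 1 ≤ D i ω)).card : ℝ) := by
        rw [hf1def]
        dsimp only
        rw [Finset.sum_boole]
      have h1' : (∑ i ∈ Finset.range n, f1 (D i ω)) - n * ∫ ω, f1 (D 0 ω) ∂μ < (k : ℝ) / 2 :=
        lt_of_abs_lt hB1
      have h2' : 0 ≤ (n : ℝ) * ∫ ω, f1 (D 0 ω) ∂μ := by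
        rw [hE1]
        exact mul_nonneg (Nat.cast_nonneg n) (hp_nonneg _)
      have h3' : (n : ℝ) * ∫ ω, f1 (D 0 ω) ∂μ ≤ (k : ℝ) / 2 := by
        rw [hE1]; exact hnpt
      rw [hS1] at h1'
      linarith
    have hcnt : ((Finset.range n).filter (fun i => t + 1 ≤ D i ω)).card ≤ k := by
      have : ((Finset.range n).filter (fun i => t + 1 ≤ D i ω)).card < k := by
        exact_mod_cast hcount
      omega
    have hg : Graphical n (fun i => D i ω) := hω
    have hkey := graphical_key htn hg hcnt
    -- bound the empirical sum S2
    have hS2le : (∑ i ∈ Finset.range n, f2 (D i ω)) ≤ (k : ℝ) * k := by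
      have hsplit2 : ∀ i, f2 (D i ω)
          = ((min (D i ω) n - min (D i ω) t : ℕ) : ℝ) - ((min (D i ω) k : ℕ) : ℝ) := by
        intro i
        rw [hf2def]
        dsimp only
        rw [Nat.cast_sub (min_le_min le_rfl htn)]
      calc (∑ i ∈ Finset.range n, f2 (D i ω))
          = ((∑ i ∈ Finset.range n, (min (D i ω) n - min (D i ω) t) : ℕ) : ℝ)
            - ((∑ i ∈ Finset.range n, min (D i ω) k : ℕ) : ℝ) := by
            rw [Finset.sum_congr rfl fun i _ => hsplit2 i, Finset.sum_sub_distrib,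
              Nat.cast_sum, Nat.cast_sum]
        _ ≤ (((k * k : ℕ) : ℝ) + ((∑ i ∈ Finset.range n, min (D i ω) k : ℕ) : ℝ))
            - ((∑ i ∈ Finset.range n, min (D i ω) k : ℕ) : ℝ) := by
            have h1' : ((∑ i ∈ Finset.range n, (min (D i ω) n - min (D i ω) t) : ℕ) : ℝ)
                ≤ ((k * k + ∑ i ∈ Finset.range n, min (D i ω) k : ℕ) : ℝ) :=
              Nat.cast_le.mpr hkey
            push_cast at h1' ⊢
            linarith
        _ = (k : ℝ) * k := by push_cast; ring
    have hES2 : (n : ℝ) * ρ ≤ n * ∫ ω, f2 (D 0 ω) ∂μ :=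
      mul_le_mul_of_nonneg_left hE2low (Nat.cast_nonneg n)
    have habs : (n : ℝ) * ρ / 2 ≤ (n * ∫ ω, f2 (D 0 ω) ∂μ)
        - (∑ i ∈ Finset.range n, f2 (D i ω)) := by
      have h9' : (n : ℝ) * ρ - (k : ℝ) * k ≤ (n * ∫ ω, f2 (D 0 ω) ∂μ)
          - (∑ i ∈ Finset.range n, f2 (D i ω)) := sub_le_sub hES2 hS2le
      calc (n : ℝ) * ρ / 2 = (n : ℝ) * ρ - (n : ℝ) * ρ / 2 := by ring
        _ ≤ (n : ℝ) * ρ - (k : ℝ) * k := sub_le_sub_left hnρ' _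
        _ ≤ (n * ∫ ω, f2 (D 0 ω) ∂μ) - (∑ i ∈ Finset.range n, f2 (D i ω)) := h9'
    have : (n : ℝ) * ρ / 2 ≤
        |(∑ i ∈ Finset.range n, f2 (D i ω)) - n * ∫ ω, f2 (D 0 ω) ∂μ| := by
      rw [abs_sub_comm]
      exact le_trans habs (le_abs_self _)
    exact this
  -- put everything together
  calc μ {ω | Graphical n (fun i => D i ω)}
      ≤ μ ({ω | (k : ℝ) / 2 ≤
          |(∑ i ∈ Finset.range n, f1 (D i ω)) - n * ∫ ω, f1 (D 0 ω) ∂μ|} ∪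
        {ω | (n : ℝ) * ρ / 2 ≤
          |(∑ i ∈ Finset.range n, f2 (D i ω)) - n * ∫ ω, f2 (D 0 ω) ∂μ|}) :=
        measure_mono hincl
    _ ≤ μ {ω | (k : ℝ) / 2 ≤
          |(∑ i ∈ Finset.range n, f1 (D i ω)) - n * ∫ ω, f1 (D 0 ω) ∂μ|} +
        μ {ω | (n : ℝ) * ρ / 2 ≤
          |(∑ i ∈ Finset.range n, f2 (D i ω)) - n * ∫ ω, f2 (D 0 ω) ∂μ|} :=
        measure_union_le _ _
    _ ≤ ENNReal.ofReal (δ / 2) + ENNReal.ofReal (δ / 2) := add_le_add hμB1 hμB2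
    _ = ENNReal.ofReal δ := by
        rw [← ENNReal.ofReal_add (by positivity) (by positivity)]
        norm_num
    _ = ε := ENNReal.ofReal_toReal hεtop
end

section
/- Let g : [0, ∞) → {1, 2, 3, …} be right-continuous and nondecreasing with g(u) → ∞ as u → ∞, let g⁻¹(n) = inf{u ≥ 0 : g(u) ≥ n}, and let D be the positive-integer-valued random variable with P(D ≥ n) = 1 − exp(−1/g⁻¹(n)) for all n ≥ 1. If lim_{n→∞} n·P(D ≥ n) = c for some 0 < c < ∞, then lim_{x→∞} g(x)/x = c. -/
/-!
Since `1 - exp (-s) ~ s` as `s → 0`, the hypothesis says `n / g⁻¹(n) → c`. Right-continuity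
makes `g⁻¹` an exact inverse, `g⁻¹(n) ≤ x ↔ n ≤ g x`, so `g⁻¹(g x) ≤ x < g⁻¹(g x + 1)`,
and `g x / x` is squeezed between two ratios that both tend to `c`.
-/

open Filter

/-- `g⁻¹(n) = inf {u ≥ 0 : g(u) ≥ n}`. -/
noncomputable def ginv (g : ℝ → ℕ) (n : ℕ) : ℝ := sInf {u : ℝ | 0 ≤ u ∧ n ≤ g u}

/-- `P(D ≥ n)` for `D = g(1/X)`, `X` a rate-1 exponential:
`P(D ≥ n) = 1 − exp(−1/g⁻¹(n))` (equal to `1` when `g⁻¹(n) = 0`). -/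
noncomputable def tailP (g : ℝ → ℕ) (n : ℕ) : ℝ :=
  if ginv g n = 0 then 1 else 1 - Real.exp (-1 / ginv g n)

open Topology Real

lemma tendsto_nhds_zero_of_tendsto_mul {α : Type*} {l : Filter α} {a b : α → ℝ} {c : ℝ}
    (ha : Tendsto a l atTop) (h : Tendsto (fun x => a x * b x) l (𝓝 c)) :
    Tendsto b l (𝓝 0) :=
  (h.div_atTop ha).congr' <| (ha.eventually_gt_atTop 0).mono fun x hx => by field_simp

lemma tendsto_one_sub_exp_neg_div_self :
    Tendsto (fun s : ℝ => (1 - exp (-s)) / s) (𝓝[≠] 0) (𝓝 1) := by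
  have hderiv : HasDerivAt (fun s : ℝ => 1 - exp (-s)) 1 0 := by
    simpa using ((hasDerivAt_neg (0 : ℝ)).exp).const_sub 1
  refine (hasDerivAt_iff_tendsto_slope.mp hderiv).congr fun s => ?_
  simp [slope_def_field]

lemma tendsto_mul_of_tendsto_mul_one_sub_exp_neg {α : Type*} {l : Filter α} {a s : α → ℝ}
    {c : ℝ} (ha : Tendsto a l atTop) (hs : ∀ᶠ x in l, 0 < s x)
    (h : Tendsto (fun x => a x * (1 - exp (-s x))) l (𝓝 c)) :
    Tendsto (fun x => a x * s x) l (𝓝 c) := by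
  have hexp : Tendsto (fun x => 1 - exp (-s x)) l (𝓝 0) := tendsto_nhds_zero_of_tendsto_mul ha h
  have hs0 : Tendsto s l (𝓝[≠] 0) := by
    have hlog : Tendsto (fun x => -log (1 - (1 - exp (-s x)))) l (𝓝 (-log (1 - 0))) :=
      ((continuousAt_log (by norm_num)).tendsto.comp (tendsto_const_nhds.sub hexp)).neg
    refine tendsto_nhdsWithin_iff.mpr ⟨?_, hs.mono fun x hx => hx.ne'⟩
    simpa using hlog
  have hquot := h.div (tendsto_one_sub_exp_neg_div_self.comp hs0) one_ne_zero
  rw [div_one] at hquot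
  refine hquot.congr' (hs.mono fun x hx => ?_)
  have : 1 - exp (-s x) ≠ 0 := by
    have : exp (-s x) < 1 := exp_lt_one_iff.mpr (neg_lt_zero.mpr hx)
    linarith
  simp only [Pi.div_apply, Function.comp_apply]
  field_simp

lemma tendsto_div_of_le_of_lt_succ {f : ℕ → ℝ} {N : ℝ → ℕ} {c : ℝ}
    (hf : Tendsto (fun n : ℕ => (n : ℝ) / f n) atTop (𝓝 c)) (hfpos : ∀ᶠ n in atTop, 0 < f n)
    (hN : Tendsto N atTop atTop) (hle : ∀ᶠ x in atTop, f (N x) ≤ x)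
    (hlt : ∀ᶠ x in atTop, x < f (N x + 1)) :
    Tendsto (fun x => (N x : ℝ) / x) atTop (𝓝 c) := by
  have hf_succ : Tendsto (fun n : ℕ => (n : ℝ) / f (n + 1)) atTop (𝓝 c) := by
    have := (tendsto_natCast_div_add_atTop (1 : ℝ)).mul (hf.comp (tendsto_add_atTop_nat 1))
    rw [one_mul] at this
    refine this.congr fun n => ?_
    have : (n : ℝ) + 1 ≠ 0 := by positivity
    rw [Function.comp_apply]
    push_cast
    field_simp
  have hpos : ∀ᶠ x in atTop, 0 < f (N x) := hN.eventually hfpos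
  refine tendsto_of_tendsto_of_tendsto_of_le_of_le' (hf_succ.comp hN) (hf.comp hN) ?_ ?_
  · filter_upwards [hpos, hle, hlt] with x hp hl hu
    exact div_le_div_of_nonneg_left (Nat.cast_nonneg _) (hp.trans_le hl) hu.le
  · filter_upwards [hpos, hle] with x hp hl
    exact div_le_div_of_nonneg_left (Nat.cast_nonneg _) hp hl

lemma ginv_nonneg (g : ℝ → ℕ) (n : ℕ) : 0 ≤ ginv g n :=
  Real.sInf_nonneg fun _ hu => hu.1

section ginv

variable {g : ℝ → ℕ}

lemma ginv_le {n : ℕ} {x : ℝ} (hx : 0 ≤ x) (hn : n ≤ g x) : ginv g n ≤ x :=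
  csInf_le ⟨0, fun _ hu => hu.1⟩ ⟨hx, hn⟩

lemma le_apply_ginv (hrc : ∀ x, 0 ≤ x → ContinuousWithinAt g (Set.Ici x) x)
    (hinf : Tendsto g atTop atTop) (n : ℕ) : n ≤ g (ginv g n) := by
  obtain ⟨x, hxn, hx⟩ := ((hinf.eventually_ge_atTop n).and (eventually_ge_atTop 0)).exists
  have hconst : ∀ᶠ u in 𝓝[≥] ginv g n, g u = g (ginv g n) := by
    have := hrc _ (ginv_nonneg g n)
    rwa [ContinuousWithinAt, nhds_discrete, tendsto_pure] at this
  obtain ⟨b, hb, hsub⟩ := mem_nhdsGE_iff_exists_Ico_subset.mp hconst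
  obtain ⟨u, hu, hub⟩ := exists_lt_of_csInf_lt (s := {u | 0 ≤ u ∧ n ≤ g u}) ⟨x, hx, hxn⟩ hb
  calc n ≤ g u := hu.2
    _ = g (ginv g n) := hsub ⟨ginv_le hu.1 hu.2, hub⟩

lemma lt_ginv_succ (hmono : MonotoneOn g (Set.Ici 0))
    (hrc : ∀ x, 0 ≤ x → ContinuousWithinAt g (Set.Ici x) x)
    (hinf : Tendsto g atTop atTop) {x : ℝ} (hx : 0 ≤ x) : x < ginv g (g x + 1) := by
  by_contra! h
  have := hmono (ginv_nonneg g _) hx h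
  have := le_apply_ginv hrc hinf (g x + 1)
  omega

lemma tailP_eq {n : ℕ} (h : 0 < ginv g n) : tailP g n = 1 - exp (-(ginv g n)⁻¹) := by
  simp [tailP, h.ne', neg_div]

variable {c : ℝ}

lemma eventually_ginv_pos (htail : Tendsto (fun n : ℕ => (n : ℝ) * tailP g n) atTop (𝓝 c)) :
    ∀ᶠ n in atTop, 0 < ginv g n := by
  have h0 := tendsto_nhds_zero_of_tendsto_mul tendsto_natCast_atTop_atTop htail
  filter_upwards [h0.eventually (eventually_lt_nhds one_pos)] with n hn
  refine (ginv_nonneg g n).lt_of_ne fun h => ?_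
  simp [tailP, ← h] at hn

lemma tendsto_natCast_div_ginv
    (htail : Tendsto (fun n : ℕ => (n : ℝ) * tailP g n) atTop (𝓝 c)) :
    Tendsto (fun n : ℕ => (n : ℝ) / ginv g n) atTop (𝓝 c) := by
  have hpos := eventually_ginv_pos htail
  simpa only [div_eq_mul_inv] using
    tendsto_mul_of_tendsto_mul_one_sub_exp_neg (s := fun n => (ginv g n)⁻¹)
      tendsto_natCast_atTop_atTop (hpos.mono fun n hn => inv_pos.mpr hn)
      (htail.congr' (hpos.mono fun n hn => by rw [tailP_eq hn]))

end ginv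

theorem g_div_x_tendsto_general (g : ℝ → ℕ)
    (hmono : MonotoneOn g (Set.Ici 0))
    (hrc : ∀ x, 0 ≤ x → ContinuousWithinAt g (Set.Ici x) x)
    (hinf : Tendsto g atTop atTop)
    (c : ℝ)
    (htail : Tendsto (fun n : ℕ => (n : ℝ) * tailP g n) atTop (nhds c)) :
    Tendsto (fun x : ℝ => (g x : ℝ) / x) atTop (nhds c) :=
  tendsto_div_of_le_of_lt_succ (tendsto_natCast_div_ginv htail) (eventually_ginv_pos htail) hinf
    ((eventually_ge_atTop 0).mono fun _ hx => ginv_le hx le_rfl)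
    ((eventually_ge_atTop 0).mono fun _ hx => lt_ginv_succ hmono hrc hinf hx)

/-- If `g : [0,∞) → {1,2,…}` is right-continuous, nondecreasing, tends to `∞`, and the
random variable `D` with `P(D ≥ n) = 1 − exp(−1/g⁻¹(n))` satisfies `n·P(D ≥ n) → c` with
`0 < c < ∞`, then `g(x)/x → c` as `x → ∞`. -/
theorem g_div_x_tendsto (g : ℝ → ℕ)
    (hg1 : ∀ x, 0 ≤ x → 1 ≤ g x)
    (hmono : MonotoneOn g (Set.Ici 0))
    (hrc : ∀ x, 0 ≤ x → ContinuousWithinAt g (Set.Ici x) x)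
    (hinf : Tendsto g atTop atTop)
    (c : ℝ) (hc : 0 < c)
    (htail : Tendsto (fun n : ℕ => (n : ℝ) * tailP g n) atTop (nhds c)) :
    Tendsto (fun x : ℝ => (g x : ℝ) / x) atTop (nhds c) :=
  g_div_x_tendsto_general g hmono hrc hinf c htail
end

section
/- Let x_1, …, x_n be real numbers, let s_k = x_1 + ⋯ + x_k denote their partial sums, and suppose S ≥ 0 is a constant such that |s_k − k| ≤ S·√(k·log(k+1)) for all 1 ≤ k ≤ n. Then for every 1 ≤ i ≤ n, |Σ_{l=1}^i (x_l − 1)/(n − l + 1)| ≤ 2S·√(i·log(i+1))/(n − i + 1). -/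
private lemma tele_bound (n : ℕ) : ∀ m : ℕ, m < n →
    ∑ k ∈ Finset.range m, 1 / (((n:ℝ) - k - 1) * ((n:ℝ) - k)) ≤ 1 / ((n:ℝ) - m) := by
  intro m
  induction m with
  | zero =>
    intro hn
    simp only [Finset.range_zero, Finset.sum_empty, Nat.cast_zero, sub_zero]
    have : (0:ℝ) < n := by exact_mod_cast hn
    positivity
  | succ m ih =>
    intro hm
    have h1 : (m:ℝ) + 1 < n := by exact_mod_cast hm
    have h2 : (0:ℝ) < (n:ℝ) - m - 1 := by linarith
    have h3 : (0:ℝ) < (n:ℝ) - m := by linarith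
    rw [Finset.sum_range_succ]
    have hih := ih (by omega)
    have key : 1 / ((n:ℝ) - m) + 1 / (((n:ℝ) - m - 1) * ((n:ℝ) - m)) = 1 / ((n:ℝ) - m - 1) := by
      field_simp
      ring
    have hrw : (n:ℝ) - (↑m + 1) = ↑n - ↑m - 1 := by ring
    push_cast
    rw [hrw]
    linarith

private lemma abel_identity (n : ℕ) (x : ℕ → ℝ) : ∀ i : ℕ, 1 ≤ i → i ≤ n →
    ∑ l ∈ Finset.range i, (x l - 1) / ((n:ℝ) - l)
      = ((∑ l ∈ Finset.range i, x l) - i) / ((n:ℝ) - i + 1)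
        - ∑ k ∈ Finset.range (i - 1),
            ((∑ l ∈ Finset.range (k + 1), x l) - ((k + 1 : ℕ) : ℝ)) /
              (((n:ℝ) - k - 1) * ((n:ℝ) - k)) := by
  intro i
  induction i with
  | zero => omega
  | succ m ih =>
    intro _ hin
    rcases Nat.eq_zero_or_pos m with rfl | hm
    · have hn : (1:ℝ) ≤ n := by exact_mod_cast hin
      simp [Finset.sum_range_one]
    · obtain ⟨p, rfl⟩ := Nat.exists_eq_succ_of_ne_zero (Nat.pos_iff_ne_zero.mp hm)
      have hih := ih (by omega) (by omega)
      have hn : ((p:ℝ) + 2) ≤ n := by exact_mod_cast hin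
      have hc1 : ((n:ℝ) - p - 1) ≠ 0 := by linarith
      have hc2 : ((n:ℝ) - p) ≠ 0 := by linarith
      rw [Finset.sum_range_succ, hih]
      simp only [Nat.add_sub_cancel]
      rw [Finset.sum_range_succ (fun k => ((∑ l ∈ Finset.range (k + 1), x l) - ((k + 1 : ℕ) : ℝ)) /
              (((n:ℝ) - k - 1) * ((n:ℝ) - k))) p,
        Finset.sum_range_succ x (p + 1)]
      push_cast
      have key : ∀ d u b : ℝ, b ≠ 0 → b - 1 ≠ 0 →
          d / b + u / (b - 1) = (d + u) / (b - 1) - d / ((b - 1) * b) := by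
        intro d u b hb hb1
        field_simp
        ring
      have hk := key ((∑ l ∈ Finset.range (p + 1), x l) - ((p:ℝ) + 1)) (x (p + 1) - 1)
        ((n:ℝ) - p) hc2 (by linarith)
      linear_combination hk

/-- Deterministic summation-by-parts estimate: if the partial sums `s_k = x_1 + ⋯ + x_k`
satisfy `|s_k − k| ≤ S √(k log(k+1))` for `1 ≤ k ≤ n`, then for `1 ≤ i ≤ n`,
`|∑_{l=1}^i (x_l − 1)/(n − l + 1)| ≤ 2 S √(i log(i+1)) / (n − i + 1)`.
(Here `x` is written 0-indexed: `x_l = x (l-1)`.) -/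
theorem summation_by_parts_bound (n : ℕ) (x : ℕ → ℝ) (S : ℝ) (hS : 0 ≤ S)
    (h : ∀ k : ℕ, 1 ≤ k → k ≤ n →
      |(∑ l ∈ Finset.range k, x l) - k| ≤ S * Real.sqrt (k * Real.log (k + 1))) :
    ∀ i : ℕ, 1 ≤ i → i ≤ n →
      |∑ l ∈ Finset.range i, (x l - 1) / ((n - l : ℕ) : ℝ)| ≤
        2 * S * Real.sqrt (i * Real.log (i + 1)) / ((n - i + 1 : ℕ) : ℝ) := by
  intro i hi1 hin
  set g := Real.sqrt (i * Real.log (i + 1)) with hg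
  have hg0 : 0 ≤ g := Real.sqrt_nonneg _
  have hsum : ∑ l ∈ Finset.range i, (x l - 1) / ((n - l : ℕ) : ℝ)
      = ∑ l ∈ Finset.range i, (x l - 1) / ((n:ℝ) - l) := by
    refine Finset.sum_congr rfl fun l hl => ?_
    have hl' : l ≤ n := by have := Finset.mem_range.mp hl; omega
    rw [Nat.cast_sub hl']
  have hden : ((n - i + 1 : ℕ) : ℝ) = (n:ℝ) - i + 1 := by
    push_cast [Nat.cast_sub hin]; ring
  have hD : (0:ℝ) < (n:ℝ) - i + 1 := by
    have : (i:ℝ) ≤ n := by exact_mod_cast hin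
    linarith
  rw [hsum, hden, abel_identity n x i hi1 hin]
  have hgmono : ∀ k : ℕ, 1 ≤ k → k ≤ i → Real.sqrt (k * Real.log (k + 1)) ≤ g := by
    intro k hk1 hki
    apply Real.sqrt_le_sqrt
    have hki' : (k:ℝ) ≤ i := by exact_mod_cast hki
    have h1k : (1:ℝ) ≤ (k:ℝ) := by exact_mod_cast hk1
    have hki'' : (k:ℝ) + 1 ≤ (i:ℝ) + 1 := by linarith
    have hlog : Real.log ((k:ℝ) + 1) ≤ Real.log ((i:ℝ) + 1) := by
      apply Real.log_le_log (by linarith) hki''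
    have hlog0 : 0 ≤ Real.log ((k:ℝ) + 1) := Real.log_nonneg (by linarith)
    exact mul_le_mul hki' hlog hlog0 (by linarith)
  have h1 : |((∑ l ∈ Finset.range i, x l) - (i:ℝ)) / ((n:ℝ) - i + 1)| ≤ S * g / ((n:ℝ) - i + 1) := by
    rw [abs_div, abs_of_pos hD]
    gcongr
    exact h i hi1 hin
  have hterm : ∀ k ∈ Finset.range (i - 1),
      |((∑ l ∈ Finset.range (k + 1), x l) - ((k + 1 : ℕ) : ℝ)) /
          (((n:ℝ) - k - 1) * ((n:ℝ) - k))|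
        ≤ S * g * (1 / (((n:ℝ) - k - 1) * ((n:ℝ) - k))) := by
    intro k hk
    have hk' : k < i - 1 := Finset.mem_range.mp hk
    have hkn : k + 1 ≤ n := by omega
    have hk2 : (k:ℝ) + 2 ≤ n := by exact_mod_cast (show k + 2 ≤ n by omega)
    have hc1 : (0:ℝ) < (n:ℝ) - k - 1 := by linarith
    have hc2 : (0:ℝ) < (n:ℝ) - k := by linarith
    rw [abs_div, abs_of_pos (by positivity : (0:ℝ) < ((n:ℝ) - k - 1) * ((n:ℝ) - k)), mul_one_div]
    gcongr
    calc |(∑ l ∈ Finset.range (k + 1), x l) - ((k + 1 : ℕ) : ℝ)|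
        ≤ S * Real.sqrt ((k + 1 : ℕ) * Real.log ((k + 1 : ℕ) + 1)) := h (k + 1) (by omega) hkn
      _ ≤ S * g := by
          apply mul_le_mul_of_nonneg_left _ hS
          exact hgmono (k + 1) (by omega) (by omega)
  have h2 : |∑ k ∈ Finset.range (i - 1),
      ((∑ l ∈ Finset.range (k + 1), x l) - ((k + 1 : ℕ) : ℝ)) /
        (((n:ℝ) - k - 1) * ((n:ℝ) - k))| ≤ S * g / ((n:ℝ) - i + 1) := by
    calc |∑ k ∈ Finset.range (i - 1), _| ≤ ∑ k ∈ Finset.range (i - 1),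
          |((∑ l ∈ Finset.range (k + 1), x l) - ((k + 1 : ℕ) : ℝ)) /
            (((n:ℝ) - k - 1) * ((n:ℝ) - k))| := Finset.abs_sum_le_sum_abs _ _
      _ ≤ ∑ k ∈ Finset.range (i - 1), S * g * (1 / (((n:ℝ) - k - 1) * ((n:ℝ) - k))) :=
          Finset.sum_le_sum hterm
      _ = S * g * ∑ k ∈ Finset.range (i - 1), 1 / (((n:ℝ) - k - 1) * ((n:ℝ) - k)) := by
          rw [← Finset.mul_sum]
      _ ≤ S * g * (1 / ((n:ℝ) - (i - 1 : ℕ))) := by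
          apply mul_le_mul_of_nonneg_left (tele_bound n (i - 1) (by omega)) (by positivity)
      _ = S * g / ((n:ℝ) - i + 1) := by
          rw [Nat.cast_sub hi1]; push_cast; ring
  calc |((∑ l ∈ Finset.range i, x l) - (i:ℝ)) / ((n:ℝ) - i + 1) -
        ∑ k ∈ Finset.range (i - 1),
          ((∑ l ∈ Finset.range (k + 1), x l) - ((k + 1 : ℕ) : ℝ)) /
            (((n:ℝ) - k - 1) * ((n:ℝ) - k))|
      ≤ |((∑ l ∈ Finset.range i, x l) - (i:ℝ)) / ((n:ℝ) - i + 1)| +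
        |∑ k ∈ Finset.range (i - 1),
          ((∑ l ∈ Finset.range (k + 1), x l) - ((k + 1 : ℕ) : ℝ)) /
            (((n:ℝ) - k - 1) * ((n:ℝ) - k))| := abs_sub _ _
    _ ≤ S * g / ((n:ℝ) - i + 1) + S * g / ((n:ℝ) - i + 1) := add_le_add h1 h2
    _ = 2 * S * g / ((n:ℝ) - i + 1) := by ring
end

section
/- Let D_1, D_2, … be i.i.d. positive-integer-valued random variables on a probability space, fix positive integers m < n, and let 𝒢 be the σ-algebra generated by {D_k : k > m}. Then for every event A, |P(A ∩ {D_1 + ⋯ + D_n is even}) − (1/2)·P(A)| ≤ 4·E|1_A − P(A | 𝒢)| + |2·P(D_1 + ⋯ + D_m is even) − 1|. -/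
open MeasureTheory ProbabilityTheory Filter

private lemma aux_indep_mono {Ω : Type*} {mΩ : MeasurableSpace Ω} {μ : Measure Ω}
    {m₁ m₂ m₁' m₂' : MeasurableSpace Ω} (h : Indep m₁ m₂ μ)
    (h1 : m₁' ≤ m₁) (h2 : m₂' ≤ m₂) : Indep m₁' m₂' μ := by
  rw [Indep_iff] at h ⊢
  exact fun t1 t2 ht1 ht2 => h t1 t2 (h1 _ ht1) (h2 _ ht2)

private lemma aux_indepFun {Ω : Type*} {mΩ : MeasurableSpace Ω} {μ : Measure Ω}
    {m₁ m₂ : MeasurableSpace Ω} (h : Indep m₁ m₂ μ) {X Y : Ω → ℝ}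
    (hX : Measurable[m₁] X) (hY : Measurable[m₂] Y) : IndepFun X Y μ :=
  (IndepFun_iff_Indep _ _ _).mpr (aux_indep_mono h hX.comap_le hY.comap_le)

private def auxSigma {Ω : Type*} (D : ℕ → Ω → ℕ) (m : ℕ) : MeasurableSpace Ω :=
  ⨆ k ∈ Set.Ici m, MeasurableSpace.comap (D k) inferInstance

/-- For i.i.d. positive-integer-valued `D_1, D_2, …` (0-indexed below), `m < n`, and `𝒢`
the σ-algebra generated by `{D_k : k > m}` (0-indexed: `k ≥ m`), every event `A` satisfies
`|P(A ∩ {D_1+⋯+D_n even}) − ½P(A)| ≤ 4·E|1_A − P(A|𝒢)| + |2·P(D_1+⋯+D_m even) − 1|`. -/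
theorem abs_prob_inter_even_sub_half_le {Ω : Type*} [mΩ : MeasurableSpace Ω]
    (μ : Measure Ω) [IsProbabilityMeasure μ]
    (D : ℕ → Ω → ℕ) (hmeas : ∀ i, Measurable (D i))
    (hindep : iIndepFun D μ)
    (hident : ∀ i, IdentDistrib (D i) (D 0) μ μ)
    (hpos : ∀ i ω, 1 ≤ D i ω)
    (m n : ℕ) (hm : 1 ≤ m) (hmn : m < n)
    (A : Set Ω) (hA : MeasurableSet A) :
    |(μ (A ∩ {ω | Even (∑ i ∈ Finset.range n, D i ω)})).toReal -
        1 / 2 * (μ A).toReal| ≤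
      4 * ∫ ω, |A.indicator (fun _ => (1 : ℝ)) ω -
          (μ[A.indicator (fun _ => (1 : ℝ)) |
            ⨆ k ∈ Set.Ici m, MeasurableSpace.comap (D k) inferInstance]) ω| ∂μ +
        |2 * (μ {ω | Even (∑ i ∈ Finset.range m, D i ω)}).toReal - 1| := by
  classical
  have hGrw : (⨆ k ∈ Set.Ici m, MeasurableSpace.comap (D k) inferInstance : MeasurableSpace Ω) =
      auxSigma D m := rfl
  rw [hGrw]
  have h𝒢 : auxSigma D m ≤ mΩ := iSup₂_le fun k _ => (hmeas k).comap_le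
  haveI : SigmaFinite (μ.trim h𝒢) := inferInstance
  set f : Ω → ℝ := A.indicator (fun _ => (1 : ℝ)) with hf_def
  set g : Ω → ℝ := μ[f | auxSigma D m] with hg_def
  have hf_int : Integrable f μ := (integrable_const (1 : ℝ)).indicator hA
  have hg_int : Integrable g μ := integrable_condExp
  have hg_sm : StronglyMeasurable[auxSigma D m] g := stronglyMeasurable_condExp
  have hg_nonneg : 0 ≤ᵐ[μ] g :=
    condExp_nonneg (Eventually.of_forall fun ω =>
      Set.indicator_nonneg (fun _ _ => zero_le_one) ω)
  -- sums
  set S : Ω → ℕ := fun ω => ∑ i ∈ Finset.range m, D i ω with hS_def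
  set T : Ω → ℕ := fun ω => ∑ i ∈ Finset.Ico m n, D i ω with hT_def
  have hsum : ∀ ω, ∑ i ∈ Finset.range n, D i ω = S ω + T ω := by
    intro ω
    rw [hS_def, hT_def]
    simp only [Finset.range_eq_Ico]
    rw [Finset.sum_Ico_consecutive _ (Nat.zero_le m) hmn.le]
  -- events
  set Se : Set Ω := {ω | Even (S ω)} with hSe_def
  set Te : Set Ω := {ω | Even (T ω)} with hTe_def
  set En : Set Ω := {ω | Even (∑ i ∈ Finset.range n, D i ω)} with hEn_def
  have hS_meas : Measurable[mΩ] S := Finset.measurable_sum _ fun i _ => hmeas i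
  have hT_meas : Measurable[mΩ] T := Finset.measurable_sum _ fun i _ => hmeas i
  have hSe_meas : MeasurableSet[mΩ] Se := hS_meas (MeasurableSet.of_discrete (s := {k | Even k}))
  have hTe_meas : MeasurableSet[mΩ] Te := hT_meas (MeasurableSet.of_discrete (s := {k | Even k}))
  have hEn_meas : MeasurableSet[mΩ] En :=
    (Finset.measurable_sum (m := mΩ) _ fun i _ => hmeas i)
      (MeasurableSet.of_discrete (s := {k | Even k}))
  have hT_meas𝒢 : Measurable[auxSigma D m] T := by
    refine Finset.measurable_sum _ fun i hi => ?_
    have hi' : i ∈ Set.Ici m := (Finset.mem_Ico.mp hi).1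
    exact Measurable.of_comap_le
      (le_iSup₂ (f := fun k (_ : k ∈ Set.Ici m) =>
        MeasurableSpace.comap (D k) inferInstance) i hi')
  have hTe_meas𝒢 : MeasurableSet[auxSigma D m] Te :=
    hT_meas𝒢 (MeasurableSet.of_discrete (s := {k | Even k}))
  -- independence
  have hIndepFun : ∀ (U : Set Ω), MeasurableSet[mΩ] U → U = S ⁻¹' {k | Even k} ∨
      U = (S ⁻¹' {k | Even k})ᶜ → ∀ (V : Set Ω), MeasurableSet[auxSigma D m] V →
      IndepFun (U.indicator fun _ => (1 : ℝ)) (V.indicator g) μ := by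
    intro U _ hU V hV
    have hS_meas' : Measurable[⨆ k ∈ Set.Iio m, MeasurableSpace.comap (D k) inferInstance] S := by
      refine Finset.measurable_sum _ fun i hi => ?_
      have hi' : i ∈ Set.Iio m := Finset.mem_range.mp hi
      exact Measurable.of_comap_le
        (le_iSup₂ (f := fun k (_ : k ∈ Set.Iio m) =>
          MeasurableSpace.comap (D k) inferInstance) i hi')
    have hU' : MeasurableSet[⨆ k ∈ Set.Iio m,
        MeasurableSpace.comap (D k) inferInstance] U := by
      rcases hU with h | h <;> rw [h]
      · exact hS_meas' (MeasurableSet.of_discrete (s := {k | Even k}))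
      · exact (hS_meas' (MeasurableSet.of_discrete (s := {k | Even k}))).compl
    have hIndep : Indep (⨆ k ∈ Set.Iio m, MeasurableSpace.comap (D k) inferInstance) (auxSigma D m) μ :=
      indep_iSup_of_disjoint (fun i => (hmeas i).comap_le) hindep.iIndep
        (Set.Iio_disjoint_Ici le_rfl)
    exact aux_indepFun hIndep (measurable_const.indicator hU')
      (hg_sm.measurable.indicator hV)
  -- decomposition of En
  have hEn_eq : En = (Se ∩ Te) ∪ (Seᶜ ∩ Teᶜ) := by
    ext ω
    simp only [hEn_def, Set.mem_setOf_eq, hsum ω, Nat.even_add, Set.mem_union,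
      Set.mem_inter_iff, Set.mem_compl_iff, hSe_def, hTe_def]
    tauto
  -- reals
  set p : ℝ := (μ Se).toReal with hp_def
  set a : ℝ := ∫ ω, Te.indicator g ω ∂μ with ha_def
  set b : ℝ := ∫ ω, Teᶜ.indicator g ω ∂μ with hb_def
  set I : ℝ := ∫ ω, |f ω - g ω| ∂μ with hI_def
  have hI_nonneg : 0 ≤ I := integral_nonneg fun ω => abs_nonneg _
  have hp_nonneg : 0 ≤ p := ENNReal.toReal_nonneg
  have hp_le_one : p ≤ 1 := by
    rw [hp_def]
    have := prob_le_one (μ := μ) (s := Se)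
    simpa using ENNReal.toReal_mono ENNReal.one_ne_top this
  -- integrabilities
  have int_Te_g : Integrable (Te.indicator g) μ := hg_int.indicator (h𝒢 _ hTe_meas𝒢)
  have int_Tec_g : Integrable (Teᶜ.indicator g) μ := hg_int.indicator (h𝒢 _ hTe_meas𝒢.compl)
  have int_Se_one : Integrable (Se.indicator fun _ => (1 : ℝ)) μ :=
    (integrable_const (1 : ℝ)).indicator hSe_meas
  have int_Sec_one : Integrable (Seᶜ.indicator fun _ => (1 : ℝ)) μ :=
    (integrable_const (1 : ℝ)).indicator hSe_meas.compl
  have ha_nonneg : 0 ≤ a := by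
    refine integral_nonneg_of_ae ?_
    filter_upwards [hg_nonneg] with ω hω
    exact Set.indicator_nonneg (fun _ _ => hω) ω
  have hb_nonneg : 0 ≤ b := by
    refine integral_nonneg_of_ae ?_
    filter_upwards [hg_nonneg] with ω hω
    exact Set.indicator_nonneg (fun _ _ => hω) ω
  have hab : a + b = (μ A).toReal := by
    have h1 : a + b = ∫ ω, (Te.indicator g ω + Teᶜ.indicator g ω) ∂μ :=
      (integral_add int_Te_g int_Tec_g).symm
    have h2 : (fun ω => Te.indicator g ω + Teᶜ.indicator g ω) = g := by
      funext ω
      exact congrFun (Set.indicator_self_add_compl Te g) ω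
    rw [h1, h2, hg_def, integral_condExp h𝒢, hf_def, integral_indicator_const (1 : ℝ) hA]
    simp [Measure.real]
  have hA_le_one : (μ A).toReal ≤ 1 := by
    have := prob_le_one (μ := μ) (s := A)
    simpa using ENNReal.toReal_mono ENNReal.one_ne_top this
  -- ∫ indicator of intersection = product of integrals
  have key_Se : ∫ ω, (Se ∩ Te).indicator g ω ∂μ = p * a := by
    have hXY : IndepFun (Se.indicator fun _ => (1 : ℝ)) (Te.indicator g) μ :=
      hIndepFun Se hSe_meas (Or.inl rfl) Te hTe_meas𝒢
    have heq : (Se ∩ Te).indicator g =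
        (Se.indicator fun _ => (1 : ℝ)) * Te.indicator g := by
      funext ω
      rw [Pi.mul_apply, ← Set.inter_indicator_mul]
      simp
    rw [heq, hXY.integral_mul_eq_mul_integral int_Se_one.aestronglyMeasurable int_Te_g.aestronglyMeasurable,
      integral_indicator_const (1 : ℝ) hSe_meas]
    simp [hp_def, ha_def, Measure.real]
  have key_Sec : ∫ ω, (Seᶜ ∩ Teᶜ).indicator g ω ∂μ = (1 - p) * b := by
    have hXY : IndepFun (Seᶜ.indicator fun _ => (1 : ℝ)) (Teᶜ.indicator g) μ :=
      hIndepFun Seᶜ hSe_meas.compl (Or.inr rfl) Teᶜ hTe_meas𝒢.compl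
    have heq : (Seᶜ ∩ Teᶜ).indicator g =
        (Seᶜ.indicator fun _ => (1 : ℝ)) * Teᶜ.indicator g := by
      funext ω
      rw [Pi.mul_apply, ← Set.inter_indicator_mul]
      simp
    have hcompl : (μ Seᶜ).toReal = 1 - p := by
      rw [prob_compl_eq_one_sub hSe_meas, hp_def,
        ENNReal.toReal_sub_of_le prob_le_one ENNReal.one_ne_top]
      simp
    rw [heq, hXY.integral_mul_eq_mul_integral int_Sec_one.aestronglyMeasurable int_Tec_g.aestronglyMeasurable,
      integral_indicator_const (1 : ℝ) hSe_meas.compl]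
    simp [hcompl, hb_def, Measure.real]
  -- ∫ En.indicator g
  have int_SeTe_g : Integrable ((Se ∩ Te).indicator g) μ :=
    hg_int.indicator (hSe_meas.inter hTe_meas)
  have int_SecTec_g : Integrable ((Seᶜ ∩ Teᶜ).indicator g) μ :=
    hg_int.indicator (hSe_meas.compl.inter hTe_meas.compl)
  have hEn_g : ∫ ω, En.indicator g ω ∂μ = p * a + (1 - p) * b := by
    have hdisj : Disjoint (Se ∩ Te) (Seᶜ ∩ Teᶜ) :=
      Disjoint.mono Set.inter_subset_left Set.inter_subset_left disjoint_compl_right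
    have h1 : En.indicator g = fun ω =>
        (Se ∩ Te).indicator g ω + (Seᶜ ∩ Teᶜ).indicator g ω := by
      funext ω
      rw [hEn_eq, Set.indicator_union_of_disjoint hdisj]
    rw [h1, integral_add int_SeTe_g int_SecTec_g, key_Se, key_Sec]
  -- P(A ∩ En) = ∫ En.indicator f
  have hPAEn : (μ (A ∩ En)).toReal = ∫ ω, En.indicator f ω ∂μ := by
    have h1 : En.indicator f = (En ∩ A).indicator fun _ => (1 : ℝ) := by
      rw [hf_def, Set.indicator_indicator]
    rw [h1, integral_indicator_const (1 : ℝ) (hEn_meas.inter hA), Set.inter_comm]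
    simp; rfl
  -- |∫ En.indicator f - ∫ En.indicator g| ≤ I
  have int_En_f : Integrable (En.indicator f) μ := hf_int.indicator hEn_meas
  have int_En_g : Integrable (En.indicator g) μ := hg_int.indicator hEn_meas
  have hclose : |(∫ ω, En.indicator f ω ∂μ) - ∫ ω, En.indicator g ω ∂μ| ≤ I := by
    rw [← integral_sub int_En_f int_En_g]
    have h1 : |∫ ω, (En.indicator f ω - En.indicator g ω) ∂μ| ≤
        ∫ ω, |En.indicator f ω - En.indicator g ω| ∂μ := by
      simpa [Real.norm_eq_abs] using
        norm_integral_le_integral_norm (fun ω => En.indicator f ω - En.indicator g ω) (μ := μ)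
    refine h1.trans ?_
    refine integral_mono ((int_En_f.sub int_En_g).abs) ((hf_int.sub hg_int).abs) fun ω => ?_
    have h2 : En.indicator f ω - En.indicator g ω = En.indicator (f - g) ω := by
      simp only [Set.indicator_apply, Pi.sub_apply]
      split_ifs <;> simp
    rw [h2]
    calc |En.indicator (f - g) ω| ≤ |(f - g) ω| := by
          by_cases hω : ω ∈ En <;> simp [Set.indicator_apply, hω, abs_nonneg]
      _ = |f ω - g ω| := rfl
  -- key middle estimate
  have hkey : |p * a + (1 - p) * b - 1 / 2 * (a + b)| ≤ |2 * p - 1| := by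
    have h1 : p * a + (1 - p) * b - 1 / 2 * (a + b) = (2 * p - 1) * (a - b) / 2 := by ring
    have h2 : |a - b| ≤ 1 := by
      rw [abs_le]
      constructor <;> nlinarith [hab, hA_le_one]
    rw [h1, abs_div, abs_mul]
    have h3 : |(2 : ℝ)| = 2 := by norm_num
    rw [h3]
    nlinarith [abs_nonneg (2 * p - 1)]
  -- conclude
  have goal_eq : (μ A).toReal = a + b := hab.symm
  calc |(μ (A ∩ En)).toReal - 1 / 2 * (μ A).toReal|
      = |(∫ ω, En.indicator f ω ∂μ) - 1 / 2 * (a + b)| := by rw [hPAEn, goal_eq]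
    _ ≤ |(∫ ω, En.indicator f ω ∂μ) - ∫ ω, En.indicator g ω ∂μ| +
        |(∫ ω, En.indicator g ω ∂μ) - 1 / 2 * (a + b)| := abs_sub_le _ _ _
    _ ≤ I + |2 * p - 1| :=
        add_le_add hclose (by rw [hEn_g]; exact hkey)
    _ ≤ 4 * I + |2 * p - 1| := by linarith
end

section
/- Let (Ω, ℱ, P) be a probability space, let 𝒢 ⊆ ℱ be a sub-σ-algebra, and let A, Ã ∈ ℱ be events that are conditionally independent given 𝒢 and satisfy P(A | 𝒢) = P(Ã | 𝒢) almost surely. Then (E|1_A − P(A | 𝒢)|)² ≤ 2·P(A Δ Ã), where A Δ Ã denotes the symmetric difference of A and Ã. -/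
open MeasureTheory

/-- If `A` and `Ã` are conditionally independent given a sub-σ-algebra `𝒢` and
`P(A|𝒢) = P(Ã|𝒢)` a.s., then `(E|1_A − P(A|𝒢)|)² ≤ 2 P(A Δ Ã)`. -/
theorem sq_L1_dist_to_condexp_le {Ω : Type*} (G : MeasurableSpace Ω) [mΩ : MeasurableSpace Ω]
    (μ : Measure Ω) [IsProbabilityMeasure μ]
    (hG : G ≤ mΩ)
    (A A' : Set Ω) (hA : MeasurableSet A) (hA' : MeasurableSet A')
    (hcondindep : μ[(A ∩ A').indicator (fun _ => (1 : ℝ)) | G] =ᵐ[μ]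
      fun ω => (μ[A.indicator (fun _ => (1 : ℝ)) | G]) ω *
        (μ[A'.indicator (fun _ => (1 : ℝ)) | G]) ω)
    (hsame : μ[A.indicator (fun _ => (1 : ℝ)) | G] =ᵐ[μ]
      μ[A'.indicator (fun _ => (1 : ℝ)) | G]) :
    (∫ ω, |A.indicator (fun _ => (1 : ℝ)) ω -
        (μ[A.indicator (fun _ => (1 : ℝ)) | G]) ω| ∂μ) ^ 2 ≤
      2 * (μ (symmDiff A A')).toReal := by
  letI : MeasurableSpace Ω := mΩ
  set f : Ω → ℝ := A.indicator (fun _ => (1 : ℝ)) with hf_def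
  set f' : Ω → ℝ := A'.indicator (fun _ => (1 : ℝ)) with hf'_def
  set g : Ω → ℝ := μ[f | G] with hg_def
  set g' : Ω → ℝ := μ[f' | G] with hg'_def
  haveI : SigmaFinite (μ.trim hG) := inferInstance
  have hA0 : MeasurableSet[mΩ] A := hA
  have hA'0 : MeasurableSet[mΩ] A' := hA'
  -- basic integrability
  have hf_int : Integrable f μ := (integrable_const (1:ℝ)).indicator hA0
  have hf'_int : Integrable f' μ := (integrable_const (1:ℝ)).indicator hA'0
  -- bounds on f and g
  have hf01 : ∀ ω, 0 ≤ f ω ∧ f ω ≤ 1 := by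
    intro ω
    constructor <;> simp [hf_def, Set.indicator] <;> split <;> norm_num
  have hg0 : 0 ≤ᵐ[μ] g := condExp_nonneg (Filter.Eventually.of_forall fun ω => (hf01 ω).1)
  have hg1 : g ≤ᵐ[μ] fun _ => (1:ℝ) := by
    have := condExp_mono (m := G) hf_int (integrable_const (1:ℝ))
      (Filter.Eventually.of_forall fun ω => (hf01 ω).2)
    rwa [condExp_const hG (1:ℝ)] at this
  -- strong measurability of g, g'
  have hgm : AEStronglyMeasurable g μ :=
    (stronglyMeasurable_condExp.mono hG).aestronglyMeasurable
  have hg'm : AEStronglyMeasurable g' μ :=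
    (stronglyMeasurable_condExp.mono hG).aestronglyMeasurable
  have hg'0 : 0 ≤ᵐ[μ] g' := condExp_nonneg (Filter.Eventually.of_forall fun ω => by
    simp [hf'_def, Set.indicator]; split <;> norm_num)
  have hg'1 : g' ≤ᵐ[μ] fun _ => (1:ℝ) := by
    have := condExp_mono (m := G) hf'_int (integrable_const (1:ℝ))
      (Filter.Eventually.of_forall fun ω => by
        simp [hf'_def, Set.indicator]; split <;> norm_num)
    rwa [condExp_const hG (1:ℝ)] at this
  -- integrability of bounded a.e.-measurable functions
  have hbdd_int : ∀ (h : Ω → ℝ), AEStronglyMeasurable h μ →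
      (∀ᵐ ω ∂μ, ‖h ω‖ ≤ 2) → Integrable h μ := fun h hm hb =>
    memLp_one_iff_integrable.mp (MemLp.of_bound hm 2 hb)
  have hgbd : ∀ᵐ ω ∂μ, ‖g ω‖ ≤ 1 := by
    filter_upwards [hg0, hg1] with ω h0 h1
    simp only [Pi.zero_apply] at h0
    rw [Real.norm_eq_abs, abs_le]; exact ⟨by linarith, h1⟩
  have hg'bd : ∀ᵐ ω ∂μ, ‖g' ω‖ ≤ 1 := by
    filter_upwards [hg'0, hg'1] with ω h0 h1
    simp only [Pi.zero_apply] at h0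
    rw [Real.norm_eq_abs, abs_le]; exact ⟨by linarith, h1⟩
  have hfbd : ∀ ω, ‖f ω‖ ≤ 1 := fun ω => by
    rw [Real.norm_eq_abs, abs_le]; exact ⟨by linarith [(hf01 ω).1], (hf01 ω).2⟩
  have hgf_int : Integrable (fun ω => g ω * f ω) μ := by
    refine hbdd_int _ (hgm.mul hf_int.1) ?_
    filter_upwards [hgbd] with ω h
    calc ‖g ω * f ω‖ = ‖g ω‖ * ‖f ω‖ := norm_mul _ _
    _ ≤ 1 * 1 := mul_le_mul h (hfbd ω) (norm_nonneg _) zero_le_one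
    _ ≤ 2 := by norm_num
  have hgg_int : Integrable (fun ω => g ω * g ω) μ := by
    refine hbdd_int _ (hgm.mul hgm) ?_
    filter_upwards [hgbd] with ω h
    calc ‖g ω * g ω‖ = ‖g ω‖ * ‖g ω‖ := norm_mul _ _
    _ ≤ 1 * 1 := mul_le_mul h h (norm_nonneg _) zero_le_one
    _ ≤ 2 := by norm_num
  have hgg'_int : Integrable (fun ω => g ω * g' ω) μ := by
    refine hbdd_int _ (hgm.mul hg'm) ?_
    filter_upwards [hgbd, hg'bd] with ω h h'
    calc ‖g ω * g' ω‖ = ‖g ω‖ * ‖g' ω‖ := norm_mul _ _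
    _ ≤ 1 * 1 := mul_le_mul h h' (norm_nonneg _) zero_le_one
    _ ≤ 2 := by norm_num
  -- key identity 1 : ∫ g f = ∫ g g
  have hkey1 : ∫ ω, g ω * f ω ∂μ = ∫ ω, g ω * g ω ∂μ := by
    have hpull : μ[g * f|G] =ᵐ[μ] g * μ[f|G] :=
      condExp_mul_of_stronglyMeasurable_left stronglyMeasurable_condExp hgf_int hf_int
    calc ∫ ω, g ω * f ω ∂μ = ∫ ω, (μ[g * f|G]) ω ∂μ := (integral_condExp (f := g * f) hG).symm
    _ = ∫ ω, (g * μ[f|G]) ω ∂μ := integral_congr_ae hpull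
    _ = ∫ ω, g ω * g ω ∂μ := rfl
  -- key identity 2 : ∫ f f' = ∫ g g' = ∫ g g
  have hff' : (fun ω => f ω * f' ω) = (A ∩ A').indicator (fun _ => (1:ℝ)) := by
    funext ω
    by_cases h : ω ∈ A <;> by_cases h' : ω ∈ A' <;>
      simp [hf_def, hf'_def, Set.indicator, h, h', Set.mem_inter_iff]
  have hff'_int : Integrable (fun ω => f ω * f' ω) μ := by
    rw [hff']; exact (integrable_const (1:ℝ)).indicator (hA0.inter hA'0)
  have hkey2 : ∫ ω, f ω * f' ω ∂μ = ∫ ω, g ω * g ω ∂μ := by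
    calc ∫ ω, f ω * f' ω ∂μ = ∫ ω, (A ∩ A').indicator (fun _ => (1:ℝ)) ω ∂μ := by rw [hff']
    _ = ∫ ω, (μ[(A ∩ A').indicator (fun _ => (1:ℝ))|G]) ω ∂μ :=
        (integral_condExp hG).symm
    _ = ∫ ω, g ω * g' ω ∂μ := integral_congr_ae hcondindep
    _ = ∫ ω, g ω * g ω ∂μ := by
        refine integral_congr_ae ?_
        filter_upwards [hsame] with ω h
        rw [← h]
  -- measures
  have hintf : ∫ ω, f ω ∂μ = (μ A).toReal := by
    simp [hf_def, integral_indicator_const, hA0, measureReal_def]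
  have hintff' : ∫ ω, f ω * f' ω ∂μ = (μ (A ∩ A')).toReal := by
    rw [hff']; simp [integral_indicator_const, hA0.inter hA'0, measureReal_def]
  -- expansion of the second moment
  have hsq_int : Integrable (fun ω => (f ω - g ω)^2) μ := by
    have : (fun ω => (f ω - g ω)^2) =
        fun ω => f ω * f ω - g ω * f ω - (g ω * f ω - g ω * g ω) := by
      funext ω; ring
    rw [this]
    have hff : (fun ω => f ω * f ω) = fun ω => f ω := by
      funext ω; by_cases h : ω ∈ A <;> simp [hf_def, Set.indicator, h]
    have hffi : Integrable (fun ω => f ω * f ω) μ := by rw [hff]; exact hf_int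
    have i1 : Integrable (fun ω => f ω * f ω - g ω * f ω) μ := hffi.sub hgf_int
    have i2 : Integrable (fun ω => g ω * f ω - g ω * g ω) μ := hgf_int.sub hgg_int
    exact i1.sub i2
  have hexp : ∫ ω, (f ω - g ω)^2 ∂μ = (μ A).toReal - (μ (A ∩ A')).toReal := by
    have hff : (fun ω => f ω * f ω) = fun ω => f ω := by
      funext ω; by_cases h : ω ∈ A <;> simp [hf_def, Set.indicator, h]
    have h1 : (fun ω => (f ω - g ω)^2) =
        fun ω => f ω * f ω - g ω * f ω - (g ω * f ω - g ω * g ω) := by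
      funext ω; ring
    have hffi : Integrable (fun ω => f ω * f ω) μ := by rw [hff]; exact hf_int
    have i1 : Integrable (fun ω => f ω * f ω - g ω * f ω) μ := hffi.sub hgf_int
    have i2 : Integrable (fun ω => g ω * f ω - g ω * g ω) μ := hgf_int.sub hgg_int
    rw [h1, integral_sub i1 i2, integral_sub hffi hgf_int, integral_sub hgf_int hgg_int, hff,
      hkey1, hintf, ← hkey2, hintff']
    ring
  -- the second moment is at most 2 μ(A Δ A')
  have hmeas_le : (μ A).toReal - (μ (A ∩ A')).toReal ≤ 2 * (μ (symmDiff A A')).toReal := by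
    have h1 : μ (A ∩ A') + μ (A \ A') = μ A := measure_inter_add_diff A hA'0
    have h2 : μ (A \ A') ≤ μ (symmDiff A A') :=
      measure_mono (by rw [Set.symmDiff_def]; exact Set.subset_union_left)
    have hAne : μ A ≠ ⊤ := measure_ne_top μ A
    have hne1 : μ (A ∩ A') ≠ ⊤ := measure_ne_top _ _
    have hne2 : μ (A \ A') ≠ ⊤ := measure_ne_top _ _
    have := ENNReal.toReal_mono (measure_ne_top μ _) h2
    have h1' : (μ (A ∩ A')).toReal + (μ (A \ A')).toReal = (μ A).toReal := by
      rw [← ENNReal.toReal_add hne1 hne2, h1]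
    have hnn : 0 ≤ (μ (symmDiff A A')).toReal := ENNReal.toReal_nonneg
    linarith
  -- Cauchy–Schwarz
  have hcs : (∫ ω, |f ω - g ω| ∂μ) ^ 2 ≤ ∫ ω, (f ω - g ω)^2 ∂μ := by
    have habs_m : AEStronglyMeasurable (fun ω => |f ω - g ω|) μ := by
      have := (hf_int.1.sub hgm).norm
      simpa [Real.norm_eq_abs] using this
    have habs_bd : ∀ᵐ ω ∂μ, ‖|f ω - g ω|‖ ≤ 2 := by
      filter_upwards [hgbd] with ω h
      rw [Real.norm_eq_abs, abs_abs]
      calc |f ω - g ω| ≤ |f ω| + |g ω| := abs_sub _ _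
      _ ≤ 1 + 1 := by
          have := hfbd ω; rw [Real.norm_eq_abs] at this
          rw [Real.norm_eq_abs] at h; linarith
      _ = 2 := by norm_num
    have hmem : MemLp (fun ω => |f ω - g ω|) (ENNReal.ofReal 2) μ :=
      MemLp.of_bound habs_m 2 habs_bd
    have hmem1 : MemLp (fun _ : Ω => (1:ℝ)) (ENNReal.ofReal 2) μ := memLp_const 1
    have hpq : Real.HolderConjugate 2 2 := Real.HolderConjugate.two_two
    have := integral_mul_le_Lp_mul_Lq_of_nonneg hpq
      (Filter.Eventually.of_forall fun ω => abs_nonneg (f ω - g ω))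
      (Filter.Eventually.of_forall fun _ => zero_le_one) hmem hmem1
    simp only [mul_one, Real.one_rpow, integral_const, measure_univ, probReal_univ, ENNReal.toReal_one,
      smul_eq_mul, one_mul] at this
    have heq : ∫ a, |f a - g a| ^ (2:ℝ) ∂μ = ∫ ω, (f ω - g ω)^2 ∂μ := by
      refine integral_congr_ae (Filter.Eventually.of_forall fun ω => ?_)
      simp only [show ((2:ℝ)) = ((2:ℕ):ℝ) by norm_num, Real.rpow_natCast, sq_abs]
    rw [heq] at this
    have hI2 : 0 ≤ ∫ ω, (f ω - g ω)^2 ∂μ := integral_nonneg fun ω => sq_nonneg _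
    calc (∫ ω, |f ω - g ω| ∂μ) ^ 2 ≤ ((∫ ω, (f ω - g ω)^2 ∂μ) ^ ((1:ℝ)/2)) ^ 2 :=
        pow_le_pow_left₀ (integral_nonneg fun ω => abs_nonneg _) this 2
    _ = ∫ ω, (f ω - g ω)^2 ∂μ := by
        rw [← Real.rpow_natCast ((∫ ω, (f ω - g ω)^2 ∂μ) ^ ((1:ℝ)/2)) 2,
          ← Real.rpow_mul hI2]
        norm_num
  calc (∫ ω, |f ω - g ω| ∂μ) ^ 2 ≤ ∫ ω, (f ω - g ω)^2 ∂μ := hcs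
  _ = (μ A).toReal - (μ (A ∩ A')).toReal := hexp
  _ ≤ 2 * (μ (symmDiff A A')).toReal := hmeas_le
end
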